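/- arXiv:1709.07988 — 11 statements merged into one kernel-verified Lean document; each statement's English description precedes it below -/
import Mathlib

section
/- Let λ, μ, c > 0 with μ/λ < c, and let x : [0,∞) → ℝ be differentiable with x'(t) = λ x(t)² − (λc + μ) x(t) + μc for all t ≥ 0. If x(0) ∈ [0, c) then x(t) → μ/λ as t → ∞; if x(0) = c then x(t) = c for all t ≥ 0. -/
/-! The right-hand side factors as `λ (x - μ/λ) (x - c)`, so for either root `e` the deviation
`y = x - e` solves a linear equation `y' = G t * y`, and Grönwall gives
`|y t| ≤ |y 0| * exp (K t)` whenever `G ≤ K`. For `e = c` (with `K` a bound of `G` on a compact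
interval) this forces `y ≡ 0` from `y 0 = 0`. For `e = μ/λ`, any level `m` strictly between
`max (μ/λ) (x 0)` and `c` cannot be crossed upwards, since the vector field is negative there;
hence `G = λ (x - c) ≤ λ (m - c) < 0` and `x` converges to `μ/λ` exponentially fast. -/

open Set Filter Real Topology

theorem abs_le_abs_mul_exp_of_hasDerivWithinAt_mul {y G : ℝ → ℝ} {K a b : ℝ}
    (hy : ContinuousOn y (Icc a b))
    (hy' : ∀ t ∈ Ico a b, HasDerivWithinAt y (G t * y t) (Ici t) t)
    (hG : ∀ t ∈ Ico a b, G t ≤ K) :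
    ∀ t ∈ Icc a b, |y t| ≤ |y a| * exp (K * (t - a)) := by
  intro t ht
  -- Grönwall applies to `y ^ 2`, whose derivative `2 G y ^ 2` is at most `2 K y ^ 2` for any sign
  -- of `K`; the norm version would need a bound on `|G|`.
  have hsq : y t ^ 2 ≤ y a ^ 2 * exp (2 * K * (t - a)) := by
    rw [← gronwallBound_ε0]
    refine le_gronwallBound_of_liminf_deriv_right_le (hy.pow 2)
      (fun s hs _ hr => ((hy' s hs).pow 2).liminf_right_slope_le hr) le_rfl ?_ t ht
    intro s hs
    have := mul_le_mul_of_nonneg_right (hG s hs) (sq_nonneg (y s))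
    simp only [Pi.pow_apply]
    norm_num
    linarith
  refine abs_le_of_sq_le_sq ?_ (by positivity)
  calc y t ^ 2 ≤ y a ^ 2 * exp (2 * K * (t - a)) := hsq
    _ = (|y a| * exp (K * (t - a))) ^ 2 := by
      rw [mul_pow, sq_abs, ← exp_nat_mul]; ring_nf

section

variable {lam a c : ℝ} {x : ℝ → ℝ}

theorem le_of_hasDerivAt_mul_sub_mul_sub (hlam : 0 < lam)
    (hx : ∀ t ≥ (0 : ℝ), HasDerivAt x (lam * (x t - a) * (x t - c)) t)
    {m : ℝ} (ham : a < m) (hmc : m < c) (h0 : x 0 ≤ m) {t : ℝ} (ht : 0 ≤ t) : x t ≤ m := by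
  refine image_le_of_deriv_right_lt_deriv_boundary (B := fun _ => m)
    (fun s hs => (hx s hs.1).continuousAt.continuousWithinAt)
    (fun s hs => (hx s hs.1).hasDerivWithinAt) h0 (fun _ => hasDerivAt_const _ m) ?_ ⟨ht, le_rfl⟩
  rintro s - hs
  rw [hs]
  have : 0 < lam * (m - a) := mul_pos hlam (sub_pos.2 ham)
  nlinarith

theorem tendsto_of_hasDerivAt_mul_sub_mul_sub (hlam : 0 < lam)
    (hx : ∀ t ≥ (0 : ℝ), HasDerivAt x (lam * (x t - a) * (x t - c)) t)
    {m : ℝ} (hmc : m < c) (hxm : ∀ t ≥ (0 : ℝ), x t ≤ m) :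
    Tendsto x atTop (𝓝 a) := by
  set K := lam * (m - c)
  have hK : K < 0 := mul_neg_of_pos_of_neg hlam (sub_neg.2 hmc)
  have hbound : ∀ t ≥ (0 : ℝ), |x t - a| ≤ |x 0 - a| * exp (K * t) := by
    intro t ht
    have := abs_le_abs_mul_exp_of_hasDerivWithinAt_mul (y := fun s => x s - a)
      (G := fun s => lam * (x s - c)) (K := K) (b := t)
      (fun s hs => ((hx s hs.1).continuousAt.sub continuousAt_const).continuousWithinAt)
      (fun s hs => ((hx s hs.1).sub_const a).hasDerivWithinAt.congr_deriv (by ring))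
      (fun s hs => mul_le_mul_of_nonneg_left (by linarith [hxm s hs.1]) hlam.le) t ⟨ht, le_rfl⟩
    simpa using this
  have hexp : Tendsto (fun t => |x 0 - a| * exp (K * t)) atTop (𝓝 0) := by
    simpa using (tendsto_exp_atBot.comp (tendsto_id.const_mul_atTop_of_neg hK)).const_mul |x 0 - a|
  rw [tendsto_iff_norm_sub_tendsto_zero]
  exact squeeze_zero' (.of_forall fun _ => norm_nonneg _)
    ((eventually_ge_atTop 0).mono hbound) hexp

theorem eq_of_hasDerivAt_mul_sub_mul_sub
    (hx : ∀ t ≥ (0 : ℝ), HasDerivAt x (lam * (x t - a) * (x t - c)) t)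
    (h0 : x 0 = c) {t : ℝ} (ht : 0 ≤ t) : x t = c := by
  have hcont : ContinuousOn x (Icc 0 t) := fun s hs =>
    (hx s hs.1).continuousAt.continuousWithinAt
  have hG : ContinuousOn (fun s => lam * (x s - a)) (Icc 0 t) :=
    continuousOn_const.mul (hcont.sub continuousOn_const)
  obtain ⟨K, hK⟩ := isCompact_Icc.bddAbove_image hG
  have := abs_le_abs_mul_exp_of_hasDerivWithinAt_mul (y := fun s => x s - c)
    (G := fun s => lam * (x s - a)) (K := K)
    (hcont.sub continuousOn_const)
    (fun s hs => ((hx s hs.1).sub_const c).hasDerivWithinAt.congr_deriv (by ring))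
    (fun s hs => hK ⟨s, Ico_subset_Icc_self hs, rfl⟩) t ⟨ht, le_rfl⟩
  simpa [h0, sub_eq_zero] using this

end

theorem stmt_3_general (lam mu c : ℝ) (hlam : 0 < lam)
    (hcase : mu / lam < c)
    (x : ℝ → ℝ)
    (hx : ∀ t ≥ (0 : ℝ),
      HasDerivAt x (lam * x t ^ 2 - (lam * c + mu) * x t + mu * c) t) :
    (x 0 ∈ Ico (0 : ℝ) c → Tendsto x atTop (nhds (mu / lam))) ∧
    (x 0 = c → ∀ t ≥ (0 : ℝ), x t = c) := by
  have hx' : ∀ t ≥ (0 : ℝ), HasDerivAt x (lam * (x t - mu / lam) * (x t - c)) t := by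
    intro t ht
    convert hx t ht using 1
    field_simp
    ring
  refine ⟨fun ⟨_, h0c⟩ => ?_, fun h0 t ht => eq_of_hasDerivAt_mul_sub_mul_sub hx' h0 ht⟩
  obtain ⟨m, hm, hmc⟩ := exists_between (max_lt hcase h0c)
  exact tendsto_of_hasDerivAt_mul_sub_mul_sub hlam hx' hmc fun t ht =>
    le_of_hasDerivAt_mul_sub_mul_sub hlam hx' ((le_max_left _ _).trans_lt hm) hmc
      ((le_max_right _ _).trans hm.le) ht

/-- Case 1 of Theorem 3.1: when `μ/λ < c`, every solution of
`x' = λ x² − (λc + μ) x + μc` starting in `[0, c)` converges to `μ/λ`,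
and the solution starting at `c` stays at `c`. -/
theorem stmt_3 (lam mu c : ℝ) (hlam : 0 < lam) (hmu : 0 < mu) (hc : 0 < c)
    (hcase : mu / lam < c)
    (x : ℝ → ℝ)
    (hx : ∀ t ≥ (0 : ℝ),
      HasDerivAt x (lam * x t ^ 2 - (lam * c + mu) * x t + mu * c) t) :
    (x 0 ∈ Ico (0 : ℝ) c → Tendsto x atTop (nhds (mu / lam))) ∧
    (x 0 = c → ∀ t ≥ (0 : ℝ), x t = c) :=
  stmt_3_general lam mu c hlam hcase x hx
end

section
/- Let λ, μ, c > 0 with μ/λ > c, and let x : [0,∞) → ℝ be differentiable with x'(t) = λ x(t)² − (λc + μ) x(t) + μc for all t ≥ 0. If x(0) ∈ [0, c], then x(t) → c as t → ∞. -/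
/-!
With `y = c - x` the equation becomes the linear equation `y' = (λx - μ) y`, so
`y t = y 0 · exp ∫₀ᵗ (λx - μ)`. Hence `y` keeps the sign of `y 0 ≥ 0`, i.e. `x ≤ c`, and then
`λx - μ ≤ -(μ - λc) < 0` gives `0 ≤ y t ≤ y 0 · exp (-(μ - λc) t) → 0`.
-/

open Set Filter

open MeasureTheory intervalIntegral in
theorem eq_mul_exp_integral_of_hasDerivAt_mul {a y : ℝ → ℝ} (ha : ContinuousOn a (Ici 0))
    (hy : ∀ t ≥ (0 : ℝ), HasDerivAt y (a t * y t) t) {t : ℝ} (ht : 0 ≤ t) :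
    y t = y 0 * Real.exp (∫ s in (0 : ℝ)..t, a s) := by
  set A : ℝ → ℝ := fun t => ∫ s in (0 : ℝ)..t, a s
  have hA_cont : ContinuousOn A (Icc 0 t) := by
    have := continuousOn_primitive_interval (μ := volume) (a := 0) (b := t) (f := a)
      (by rw [uIcc_of_le ht]; exact (ha.mono Icc_subset_Ici_self).integrableOn_Icc)
    rwa [uIcc_of_le ht] at this
  have hA_deriv : ∀ s ≥ (0 : ℝ), HasDerivWithinAt A (a s) (Ici s) s := fun s hs =>
    integral_hasDerivWithinAt_right
      ((ha.mono Icc_subset_Ici_self).intervalIntegrable_of_Icc hs)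
      ⟨Ici 0, mem_of_superset self_mem_nhdsWithin fun r hr => hs.trans (le_of_lt hr),
        ha.aestronglyMeasurable measurableSet_Ici⟩
      ((ha s hs).mono fun r hr => hs.trans (le_of_lt hr))
  set g : ℝ → ℝ := fun s => y s * Real.exp (-A s)
  have hg_deriv : ∀ s ∈ Ico 0 t, HasDerivWithinAt g 0 (Ici s) s := fun s hs =>
    ((hy s hs.1).hasDerivWithinAt.mul (hA_deriv s hs.1).neg.exp).congr_deriv (by ring)
  have hg_cont : ContinuousOn g (Icc 0 t) :=
    ContinuousOn.mul (fun s hs => (hy s hs.1).continuousAt.continuousWithinAt)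
      hA_cont.neg.rexp
  have hg : g t = g 0 := constant_of_has_deriv_right_zero hg_cont hg_deriv t ⟨ht, le_rfl⟩
  have hA0 : A 0 = 0 := integral_same
  simp only [g, hA0, neg_zero, Real.exp_zero, mul_one] at hg
  rw [← hg, mul_assoc, ← Real.exp_add, neg_add_cancel, Real.exp_zero, mul_one]

theorem nonneg_of_hasDerivAt_mul {a y : ℝ → ℝ} (ha : ContinuousOn a (Ici 0))
    (hy : ∀ t ≥ (0 : ℝ), HasDerivAt y (a t * y t) t) (hy0 : 0 ≤ y 0) {t : ℝ} (ht : 0 ≤ t) :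
    0 ≤ y t := by
  rw [eq_mul_exp_integral_of_hasDerivAt_mul ha hy ht]
  positivity

theorem tendsto_zero_of_hasDerivAt_mul {a y : ℝ → ℝ} {δ : ℝ} (hδ : 0 < δ)
    (ha : ContinuousOn a (Ici 0)) (ha_le : ∀ t ≥ (0 : ℝ), a t ≤ -δ)
    (hy : ∀ t ≥ (0 : ℝ), HasDerivAt y (a t * y t) t) (hy0 : 0 ≤ y 0) :
    Tendsto y atTop (nhds 0) := by
  have h_upper : ∀ t ≥ (0 : ℝ), y t ≤ y 0 * Real.exp (-δ * t) := by
    intro t ht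
    have h_int : ∫ s in (0 : ℝ)..t, a s ≤ -δ * t :=
      calc ∫ s in (0 : ℝ)..t, a s ≤ ∫ _ in (0 : ℝ)..t, -δ :=
            intervalIntegral.integral_mono_on ht
              ((ha.mono Icc_subset_Ici_self).intervalIntegrable_of_Icc ht)
              intervalIntegrable_const fun s hs => ha_le s hs.1
        _ = -δ * t := by simp [mul_comm]
    rw [eq_mul_exp_integral_of_hasDerivAt_mul ha hy ht]
    gcongr
  have h_exp : Tendsto (fun t => y 0 * Real.exp (-δ * t)) atTop (nhds 0) := by
    simpa using (Real.tendsto_exp_atBot.comp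
      (tendsto_id.const_mul_atTop_of_neg (neg_neg_of_pos hδ))).const_mul (y 0)
  exact squeeze_zero'
    (eventually_ge_atTop 0 |>.mono fun t ht => nonneg_of_hasDerivAt_mul ha hy hy0 ht)
    (eventually_ge_atTop 0 |>.mono h_upper) h_exp

theorem stmt_5_general (lam mu c : ℝ) (hlam : 0 < lam)
    (hcase : c < mu / lam)
    (x : ℝ → ℝ)
    (hx : ∀ t ≥ (0 : ℝ),
      HasDerivAt x (lam * x t ^ 2 - (lam * c + mu) * x t + mu * c) t)
    (hx0 : x 0 ∈ Icc (0 : ℝ) c) :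
    Tendsto x atTop (nhds c) := by
  have hδ : 0 < mu - lam * c := by linarith [(lt_div_iff₀ hlam).mp hcase]
  have ha : ContinuousOn (fun t => lam * x t - mu) (Ici 0) := fun t ht =>
    (((hx t ht).continuousAt.const_mul lam).sub continuousAt_const).continuousWithinAt
  have hy : ∀ t ≥ (0 : ℝ), HasDerivAt (fun t => c - x t) ((lam * x t - mu) * (c - x t)) t :=
    fun t ht => ((hx t ht).const_sub c).congr_deriv (by ring)
  have hy0 : 0 ≤ c - x 0 := sub_nonneg.mpr hx0.2
  have ha_le : ∀ t ≥ (0 : ℝ), lam * x t - mu ≤ -(mu - lam * c) := fun t ht => by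
    have := nonneg_of_hasDerivAt_mul ha hy hy0 ht
    nlinarith
  simpa using (tendsto_zero_of_hasDerivAt_mul hδ ha ha_le hy hy0).const_sub c

/-- Case 2 of Theorem 3.1: when `μ/λ > c`, every solution of
`x' = λ x² − (λc + μ) x + μc` starting in `[0, c]` converges to `c`. -/
theorem stmt_5 (lam mu c : ℝ) (hlam : 0 < lam) (hmu : 0 < mu) (hc : 0 < c)
    (hcase : c < mu / lam)
    (x : ℝ → ℝ)
    (hx : ∀ t ≥ (0 : ℝ),
      HasDerivAt x (lam * x t ^ 2 - (lam * c + mu) * x t + mu * c) t)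
    (hx0 : x 0 ∈ Icc (0 : ℝ) c) :
    Tendsto x atTop (nhds c) :=
  stmt_5_general lam mu c hlam hcase x hx hx0
end

section
/- Let λ, μ, c > 0 and let x : [0,∞) → ℝ be differentiable with x'(t) = λ x(t)² − (λc + μ) x(t) + μc for all t ≥ 0. If x(0) ∈ [0, c), then lim_{t→∞} x(t) = min{c, μ/λ}. -/
/-! With `u = x - c` and `r = λc - μ` the equation is the Bernoulli equation `u' = u (λu + r)`,
solved by `u(t) (e^{-rt} + λ(c - x₀) J(t)) = x₀ - c` with `J(t) = ∫₀ᵗ e^{-rs} ds`. As `x₀ < c`, the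
bracket is positive; for `r > 0` it tends to `λ(c - x₀)/r`, so `x → c - r/λ = μ/λ`, and for `r ≤ 0`
it tends to `∞`, so `x → c`. The solution formula is checked without dividing by `u`: its defect
satisfies a linear equation and vanishes by Grönwall's inequality. -/

open Set Filter Topology

theorem eq_zero_of_hasDerivAt_smul_self {E : Type*} [NormedAddCommGroup E] [NormedSpace ℝ E]
    {q : ℝ → ℝ} {f : ℝ → E} {a : ℝ} (hq : ContinuousOn q (Ici a))
    (hf : ∀ t ≥ a, HasDerivAt f (q t • f t) t) (ha : f a = 0) : ∀ t ≥ a, f t = 0 := by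
  intro T hT
  obtain ⟨K, hK⟩ := isCompact_Icc.exists_bound_of_continuousOn (hq.mono fun _ hs => hs.1)
  refine eq_zero_of_abs_deriv_le_mul_abs_self_of_eq_zero_right (K := K)
    (fun t ht => (hf t ht.1).continuousAt.continuousWithinAt)
    (fun t ht => (hf t ht.1).hasDerivWithinAt) ha (fun t ht => ?_) T ⟨hT, le_rfl⟩
  rw [norm_smul]
  exact mul_le_mul_of_nonneg_right (hK t (Ico_subset_Icc_self ht)) (norm_nonneg _)

theorem tendsto_of_mul_eventually_eq {α G₀ : Type*} [GroupWithZero G₀] [TopologicalSpace G₀]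
    [T1Space G₀] [ContinuousInv₀ G₀] [ContinuousMul G₀] {l : Filter α} {u D N : α → G₀}
    {d n : G₀} (hD : Tendsto D l (𝓝 d)) (hd : d ≠ 0) (hN : Tendsto N l (𝓝 n))
    (h : ∀ᶠ t in l, u t * D t = N t) : Tendsto u l (𝓝 (n / d)) := by
  refine (hN.div hD hd).congr' ?_
  filter_upwards [h, hD.eventually_ne hd] with t ht hDt
  rw [Pi.div_apply, ← ht, mul_div_cancel_right₀ _ hDt]

theorem tendsto_zero_of_mul_eventually_eq {α : Type*} {l : Filter α} {u D : α → ℝ} {a : ℝ}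
    (hD : Tendsto D l atTop) (h : ∀ᶠ t in l, u t * D t = a) : Tendsto u l (𝓝 0) := by
  refine (tendsto_const_nhds (x := a)).div_atTop hD |>.congr' ?_
  filter_upwards [h, hD.eventually_gt_atTop 0] with t ht hDt
  rw [← ht, mul_div_cancel_right₀ _ hDt.ne']

open Real

theorem tendsto_exp_neg_mul_atTop_nhds_zero {r : ℝ} (hr : 0 < r) :
    Tendsto (fun t => exp (-r * t)) atTop (𝓝 0) :=
  tendsto_exp_atBot.comp (tendsto_id.const_mul_atTop_of_neg (neg_neg_of_pos hr))

/-- `∫₀ᵗ exp (-r s) ds` in closed form. -/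
noncomputable def integralExpNeg (r t : ℝ) : ℝ :=
  if r = 0 then t else (1 - exp (-r * t)) / r

theorem integralExpNeg_zero_right (r : ℝ) : integralExpNeg r 0 = 0 := by
  simp [integralExpNeg]

theorem hasDerivAt_integralExpNeg (r t : ℝ) :
    HasDerivAt (integralExpNeg r) (1 - r * integralExpNeg r t) t := by
  unfold integralExpNeg
  split_ifs with hr
  · simpa [hr] using hasDerivAt_id' t
  · have := (((hasDerivAt_id t).const_mul (-r)).exp.const_sub 1).div_const r
    refine this.congr_deriv ?_
    field_simp
    simp [id]

theorem le_integralExpNeg {r t : ℝ} (hr : r ≤ 0) : t ≤ integralExpNeg r t := by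
  unfold integralExpNeg
  split_ifs with hr0
  · exact le_rfl
  · rw [le_div_iff_of_neg (lt_of_le_of_ne hr hr0)]
    linarith [add_one_le_exp (-r * t)]

theorem tendsto_integralExpNeg {r : ℝ} (hr : 0 < r) :
    Tendsto (integralExpNeg r) atTop (𝓝 r⁻¹) := by
  have := ((tendsto_exp_neg_mul_atTop_nhds_zero hr).const_sub 1).div_const r
  have hJ : integralExpNeg r = fun t => (1 - exp (-r * t)) / r :=
    funext fun _ => if_neg hr.ne'
  simpa [hJ, one_div] using this

namespace SIS

variable {lam mu c : ℝ} {x : ℝ → ℝ}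

theorem sub_mul_exp_add_eq (hx : ∀ t ≥ (0 : ℝ), HasDerivAt x ((x t - c) * (lam * x t - mu)) t)
    {J : ℝ → ℝ} (hJ : ∀ t ≥ (0 : ℝ), HasDerivAt J (1 - (lam * c - mu) * J t) t) (hJ0 : J 0 = 0) :
    ∀ t ≥ (0 : ℝ),
      (x t - c) * (exp (-(lam * c - mu) * t) + lam * (c - x 0) * J t) = x 0 - c := by
  set G : ℝ → ℝ := fun t =>
    (x t - c) * (exp (-(lam * c - mu) * t) + lam * (c - x 0) * J t) - (x 0 - c)
  have hG : ∀ t ≥ (0 : ℝ), HasDerivAt G ((lam * (x t - c)) • G t) t := by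
    intro t ht
    have hexp := ((hasDerivAt_id t).const_mul (-(lam * c - mu))).exp
    refine (((hx t ht).sub_const c).mul (hexp.add ((hJ t ht).const_mul _))).sub_const _
      |>.congr_deriv ?_
    simp only [G, smul_eq_mul, id, Pi.add_apply]
    ring
  have hx_cont : ContinuousOn x (Ici 0) := fun t ht => (hx t ht).continuousAt.continuousWithinAt
  intro t ht
  have := eq_zero_of_hasDerivAt_smul_self
    (continuousOn_const.mul (hx_cont.sub continuousOn_const)) hG (by simp [G, hJ0]) t ht
  exact sub_eq_zero.mp this

theorem tendsto_div_of_lt_mul (hlam : 0 < lam) (hx0 : x 0 < c)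
    (hx : ∀ t ≥ (0 : ℝ), HasDerivAt x ((x t - c) * (lam * x t - mu)) t) (hr : mu < lam * c) :
    Tendsto x atTop (𝓝 (mu / lam)) := by
  have key := sub_mul_exp_add_eq hx (fun t _ => hasDerivAt_integralExpNeg _ t)
    (integralExpNeg_zero_right _)
  have hr' : 0 < lam * c - mu := sub_pos.mpr hr
  have hD := (tendsto_exp_neg_mul_atTop_nhds_zero hr').add
    ((tendsto_integralExpNeg hr').const_mul (lam * (c - x 0)))
  have hu := tendsto_of_mul_eventually_eq hD (by have := sub_pos.mpr hx0; positivity)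
    tendsto_const_nhds ((eventually_ge_atTop 0).mono key)
  have hlim : (x 0 - c) / (0 + lam * (c - x 0) * (lam * c - mu)⁻¹) + c = mu / lam := by
    have : c - x 0 ≠ 0 := (sub_pos.mpr hx0).ne'
    rw [zero_add, ← div_eq_mul_inv, div_div_eq_mul_div]
    field_simp
    ring
  rw [← hlim]
  simpa using hu.add_const c

theorem tendsto_of_mul_le (hlam : 0 < lam) (hx0 : x 0 < c)
    (hx : ∀ t ≥ (0 : ℝ), HasDerivAt x ((x t - c) * (lam * x t - mu)) t) (hr : lam * c ≤ mu) :
    Tendsto x atTop (𝓝 c) := by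
  have key := sub_mul_exp_add_eq hx (fun t _ => hasDerivAt_integralExpNeg _ t)
    (integralExpNeg_zero_right _)
  have hr' : lam * c - mu ≤ 0 := sub_nonpos.mpr hr
  have hk : 0 < lam * (c - x 0) := mul_pos hlam (sub_pos.mpr hx0)
  have hD : Tendsto (fun t => exp (-(lam * c - mu) * t) + lam * (c - x 0) *
      integralExpNeg (lam * c - mu) t) atTop atTop := by
    refine tendsto_atTop_mono' _ ?_ (tendsto_atTop_add_const_left _ 1 (tendsto_id.const_mul_atTop hk))
    filter_upwards [eventually_ge_atTop 0] with t ht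
    have h1 : 1 ≤ exp (-(lam * c - mu) * t) := one_le_exp (by nlinarith)
    have h2 := mul_le_mul_of_nonneg_left (le_integralExpNeg (t := t) hr') hk.le
    simp only [id]
    linarith
  simpa using (tendsto_zero_of_mul_eventually_eq hD ((eventually_ge_atTop 0).mono key)).add_const c

end SIS

theorem stmt_7_general (lam mu c : ℝ) (hlam : 0 < lam)
    (x : ℝ → ℝ)
    (hx : ∀ t ≥ (0 : ℝ),
      HasDerivAt x (lam * x t ^ 2 - (lam * c + mu) * x t + mu * c) t)
    (hx0 : x 0 ∈ Ico (0 : ℝ) c) :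
    Tendsto x atTop (nhds (min c (mu / lam))) := by
  have hx' : ∀ t ≥ (0 : ℝ), HasDerivAt x ((x t - c) * (lam * x t - mu)) t :=
    fun t ht => (hx t ht).congr_deriv (by ring)
  rcases lt_or_ge mu (lam * c) with hr | hr
  · rw [min_eq_right ((div_le_iff₀ hlam).mpr (by linarith))]
    exact SIS.tendsto_div_of_lt_mul hlam hx0.2 hx' hr
  · rw [min_eq_left ((le_div_iff₀ hlam).mpr (by linarith))]
    exact SIS.tendsto_of_mul_le hlam hx0.2 hx' hr

/-- Asymptotic-state formula `x(∞) = min {c, μ/λ}` for the mean-field SIS ODE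
`x' = λ x² − (λc + μ) x + μc` with initial state in `[0, c)`. -/
theorem stmt_7 (lam mu c : ℝ) (hlam : 0 < lam) (hmu : 0 < mu) (hc : 0 < c)
    (x : ℝ → ℝ)
    (hx : ∀ t ≥ (0 : ℝ),
      HasDerivAt x (lam * x t ^ 2 - (lam * c + mu) * x t + mu * c) t)
    (hx0 : x 0 ∈ Ico (0 : ℝ) c) :
    Tendsto x atTop (nhds (min c (mu / lam))) :=
  stmt_7_general lam mu c hlam x hx hx0
end

section
/- Let c > 0, let λ, μ : [0,∞) → ℝ be continuous with λ(t) > 0 for all t, and suppose there is ξ with 0 < μ(t)/λ(t) ≤ ξ < c for all t ≥ 0. Let x : [0,∞) → ℝ be differentiable with x'(t) = λ(t)(x(t) − μ(t)/λ(t))(x(t) − c) for all t ≥ 0 and x(0) ∈ [0, c). Then there exists ψ < c (one may take ψ = max{x(0), ξ}) such that 0 ≤ x(t) ≤ ψ for all t ≥ 0. -/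
/-!
At the level `0` the vector field equals `μ c > 0`, and at any level `ψ` with
`max (x 0) ξ < ψ < c` it equals `λ (ψ - μ/λ) (ψ - c) < 0`. Both levels are therefore strict
barriers that the trajectory cannot cross, and letting `ψ` decrease to `max (x 0) ξ` gives the
bound with `ψ = max (x 0) ξ`.
-/

open Set Filter

lemma le_of_hasDerivAt_of_neg_at_level {f f' : ℝ → ℝ} {a C : ℝ}
    (hf : ∀ t ≥ a, HasDerivAt f (f' t) t) (ha : f a ≤ C)
    (hC : ∀ t ≥ a, f t = C → f' t < 0) {t : ℝ} (ht : a ≤ t) : f t ≤ C :=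
  image_le_of_deriv_right_lt_deriv_boundary (B := fun _ => C) (B' := 0)
    (fun s hs => (hf s hs.1).continuousAt.continuousWithinAt)
    (fun s hs => (hf s hs.1).hasDerivWithinAt) ha (fun _ => hasDerivAt_const _ C)
    (fun s hs => hC s hs.1) ⟨ht, le_rfl⟩

lemma le_of_hasDerivAt_of_pos_at_level {f f' : ℝ → ℝ} {a C : ℝ}
    (hf : ∀ t ≥ a, HasDerivAt f (f' t) t) (ha : C ≤ f a)
    (hC : ∀ t ≥ a, f t = C → 0 < f' t) {t : ℝ} (ht : a ≤ t) : C ≤ f t :=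
  neg_le_neg_iff.mp <|
    le_of_hasDerivAt_of_neg_at_level (f := fun s => -f s) (fun s hs => (hf s hs).neg)
      (neg_le_neg ha) (fun s hs hfs => neg_neg_of_pos (hC s hs (neg_inj.mp hfs))) ht

theorem stmt_8_general (c : ℝ) (hc : 0 < c) (lam mu : ℝ → ℝ)
    (hlam : ∀ t : ℝ, 0 < lam t)
    (ξ : ℝ) (hξ : ξ < c)
    (hratio : ∀ t ≥ (0 : ℝ), 0 < mu t / lam t ∧ mu t / lam t ≤ ξ)
    (x : ℝ → ℝ)
    (hx : ∀ t ≥ (0 : ℝ),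
      HasDerivAt x (lam t * (x t - mu t / lam t) * (x t - c)) t)
    (hx0 : x 0 ∈ Ico (0 : ℝ) c) :
    ∃ ψ : ℝ, ψ < c ∧ ∀ t ≥ (0 : ℝ), x t ∈ Icc (0 : ℝ) ψ := by
  obtain ⟨hx0_nonneg, hx0_lt⟩ := hx0
  have hmax : max (x 0) ξ < c := max_lt hx0_lt hξ
  have lower : ∀ t ≥ (0 : ℝ), 0 ≤ x t := fun t ht =>
    le_of_hasDerivAt_of_pos_at_level hx hx0_nonneg (fun s hs hxs => by
      rw [hxs, show lam s * (0 - mu s / lam s) * (0 - c) = lam s * (mu s / lam s) * c by ring]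
      exact mul_pos (mul_pos (hlam s) (hratio s hs).1) hc) ht
  have upper : ∀ ψ, max (x 0) ξ < ψ → ψ < c → ∀ t ≥ (0 : ℝ), x t ≤ ψ := by
    intro ψ hψ hψc t ht
    obtain ⟨hx0ψ, hξψ⟩ := max_lt_iff.mp hψ
    refine le_of_hasDerivAt_of_neg_at_level hx hx0ψ.le (fun s hs hxs => ?_) ht
    rw [hxs]
    exact mul_neg_of_pos_of_neg
      (mul_pos (hlam s) (sub_pos.2 ((hratio s hs).2.trans_lt hξψ))) (sub_neg.2 hψc)
  refine ⟨max (x 0) ξ, hmax, fun t ht => ⟨lower t ht, ?_⟩⟩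
  refine le_of_forall_gt_imp_ge_of_dense fun ψ hψ => ?_
  obtain ⟨ψ', hψ', hψ'_lt⟩ := exists_between (lt_min hψ hmax)
  exact (upper ψ' hψ' (hψ'_lt.trans_le (min_le_right _ _)) t ht).trans
    (hψ'_lt.le.trans (min_le_left _ _))

/-- Boundedness claim in the proof of case 1 of Theorem 3.2: for the nonautonomous SIS ODE
`x' = λ(t) (x − μ(t)/λ(t)) (x − c)` with `0 < μ(t)/λ(t) ≤ ξ < c` for all `t`, every
trajectory starting in `[0, c)` stays in `[0, ψ]` for some `ψ < c`
(one may take `ψ = max {x(0), ξ}`). -/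
theorem stmt_8 (c : ℝ) (hc : 0 < c) (lam mu : ℝ → ℝ)
    (hlamc : Continuous lam) (hmuc : Continuous mu)
    (hlam : ∀ t : ℝ, 0 < lam t)
    (ξ : ℝ) (hξ : ξ < c)
    (hratio : ∀ t ≥ (0 : ℝ), 0 < mu t / lam t ∧ mu t / lam t ≤ ξ)
    (x : ℝ → ℝ)
    (hx : ∀ t ≥ (0 : ℝ),
      HasDerivAt x (lam t * (x t - mu t / lam t) * (x t - c)) t)
    (hx0 : x 0 ∈ Ico (0 : ℝ) c) :
    ∃ ψ : ℝ, ψ < c ∧ ∀ t ≥ (0 : ℝ), x t ∈ Icc (0 : ℝ) ψ :=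
  stmt_8_general c hc lam mu hlam ξ hξ hratio x hx hx0
end

section
/- Let c > 0, let λ, μ : [0,∞) → ℝ be continuous with λ(t) ≥ λ₀ > 0 for all t, and suppose there is η > 0 with μ(t)/λ(t) ≥ c + η for all t ≥ 0. Let x : [0,∞) → ℝ be differentiable with x'(t) = λ(t)(x(t) − μ(t)/λ(t))(x(t) − c) for all t ≥ 0 and x(0) ∈ [0, c]. Then x(t) ∈ [0, c] for all t, x is nondecreasing, and x(t) → c as t → ∞. -/
/-!
Write `m = μ/λ ≥ c + η`. The right-hand side `λ (x - m) (x - c)` vanishes at `x = c` and is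
strictly negative just above `c`, so the level `c + ε` (for `0 < ε < η`) can never be crossed
upwards; hence `x ≤ c`. Below `c` both factors `x - m` and `x - c` are negative, so `x` is
nondecreasing. If `x` stayed below some `a < c`, its derivative would be at least
`λ₀ η (c - a) > 0`, forcing linear growth past `c`; so `x` eventually exceeds every `a < c`.
-/

open Set Filter

theorem le_of_hasDerivAt_neg_of_eq {f f' : ℝ → ℝ} {a C : ℝ}
    (hf : ∀ t ≥ a, HasDerivAt f (f' t) t) (ha : f a ≤ C)
    (hC : ∀ t ≥ a, f t = C → f' t < 0) : ∀ t ≥ a, f t ≤ C := fun _ ht =>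
  image_le_of_deriv_right_lt_deriv_boundary (B := fun _ => C) (B' := 0)
    (fun s hs => (hf s hs.1).continuousAt.continuousWithinAt)
    (fun s hs => (hf s hs.1).hasDerivWithinAt) ha (fun _ => hasDerivAt_const _ _)
    (fun s hs => hC s hs.1) ⟨ht, le_rfl⟩

theorem add_mul_sub_le_of_le_hasDerivAt {f f' : ℝ → ℝ} {a δ : ℝ}
    (hf : ∀ t ≥ a, HasDerivAt f (f' t) t) (hδ : ∀ t ≥ a, δ ≤ f' t) :
    ∀ t ≥ a, f a + δ * (t - a) ≤ f t := by
  intro t ht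
  have key := (convex_Ici a).mul_sub_le_image_sub_of_le_deriv
    (fun s hs => (hf s hs).continuousAt.continuousWithinAt)
    (fun s hs => (hf s (interior_subset hs)).differentiableAt.differentiableWithinAt)
    (fun s hs => (hf s (interior_subset hs)).deriv ▸ hδ s (interior_subset hs))
    a self_mem_Ici t ht ht
  linarith

namespace SIS

theorem le_of_initial_le {c η : ℝ} {lam m x : ℝ → ℝ}
    (hx : ∀ t ≥ 0, HasDerivAt x (lam t * (x t - m t) * (x t - c)) t)
    (hlam : ∀ t ≥ 0, 0 < lam t) (hη : 0 < η) (hm : ∀ t ≥ 0, c + η ≤ m t) (hx0 : x 0 ≤ c) :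
    ∀ t ≥ 0, x t ≤ c := by
  intro t ht
  refine le_of_forall_pos_le_add fun ε hε => ?_
  set ε' := min ε (η / 2)
  have hε' : 0 < ε' := lt_min hε (half_pos hη)
  have hε'η : ε' < η := (min_le_right _ _).trans_lt (half_lt_self hη)
  have hcross : ∀ s ≥ 0, x s = c + ε' → lam s * (x s - m s) * (x s - c) < 0 := by
    intro s hs hxs
    have hm' := hm s hs
    exact mul_neg_of_neg_of_pos (mul_neg_of_pos_of_neg (hlam s hs) (by linarith))
      (by linarith)
  calc x t ≤ c + ε' := le_of_hasDerivAt_neg_of_eq hx (by linarith) hcross t ht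
    _ ≤ c + ε := by gcongr; exact min_le_left _ _

theorem monotoneOn {c η : ℝ} {lam m x : ℝ → ℝ}
    (hx : ∀ t ≥ 0, HasDerivAt x (lam t * (x t - m t) * (x t - c)) t)
    (hlam : ∀ t ≥ 0, 0 < lam t) (hη : 0 < η) (hm : ∀ t ≥ 0, c + η ≤ m t) (hx0 : x 0 ≤ c) :
    MonotoneOn x (Ici 0) := by
  have hle := le_of_initial_le hx hlam hη hm hx0
  refine monotoneOn_of_hasDerivWithinAt_nonneg (convex_Ici 0)
    (fun t ht => (hx t ht).continuousAt.continuousWithinAt)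
    (fun t ht => (hx t (interior_subset ht)).hasDerivWithinAt) fun t ht => ?_
  have ht : (0 : ℝ) ≤ t := interior_subset ht
  have hxt := hle t ht
  have hmt := hm t ht
  calc (0 : ℝ) ≤ lam t * (m t - x t) * (c - x t) := by
        have := hlam t ht
        have : 0 ≤ m t - x t := by linarith
        have : 0 ≤ c - x t := by linarith
        positivity
    _ = lam t * (x t - m t) * (x t - c) := by ring

theorem exists_gt {c η lam₀ : ℝ} {lam m x : ℝ → ℝ}
    (hx : ∀ t ≥ 0, HasDerivAt x (lam t * (x t - m t) * (x t - c)) t)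
    (hlam₀ : 0 < lam₀) (hlam : ∀ t ≥ 0, lam₀ ≤ lam t) (hη : 0 < η)
    (hm : ∀ t ≥ 0, c + η ≤ m t) (hx0 : x 0 ≤ c) {a : ℝ} (ha : a < c) :
    ∃ T ≥ 0, a < x T := by
  by_contra! hstuck
  set δ := lam₀ * η * (c - a)
  have hδ : 0 < δ := by have := sub_pos.2 ha; positivity
  have hderiv : ∀ t ≥ 0, δ ≤ lam t * (x t - m t) * (x t - c) := by
    intro t ht
    have hxt := hstuck t ht
    have hmt := hm t ht
    have hlamt := hlam t ht
    calc δ ≤ lam t * (m t - x t) * (c - x t) := by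
          have hfirst : lam₀ * η ≤ lam t * (m t - x t) := by gcongr <;> linarith
          exact mul_le_mul hfirst (by linarith) (by linarith) ((mul_pos hlam₀ hη).le.trans hfirst)
      _ = lam t * (x t - m t) * (x t - c) := by ring
  have hT : (0 : ℝ) ≤ (c - x 0) / δ + 1 := by
    have : 0 ≤ (c - x 0) / δ := div_nonneg (by linarith) hδ.le
    linarith
  have hgrowth := add_mul_sub_le_of_le_hasDerivAt hx hderiv _ hT
  have hupper := le_of_initial_le hx (fun t ht => hlam₀.trans_le (hlam t ht)) hη hm hx0 _ hT
  rw [sub_zero, mul_add, mul_div_cancel₀ _ hδ.ne', mul_one] at hgrowth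
  linarith

theorem tendsto {c η lam₀ : ℝ} {lam m x : ℝ → ℝ}
    (hx : ∀ t ≥ 0, HasDerivAt x (lam t * (x t - m t) * (x t - c)) t)
    (hlam₀ : 0 < lam₀) (hlam : ∀ t ≥ 0, lam₀ ≤ lam t) (hη : 0 < η)
    (hm : ∀ t ≥ 0, c + η ≤ m t) (hx0 : x 0 ≤ c) :
    Tendsto x atTop (nhds c) := by
  have hlam_pos t (ht : t ≥ 0) : 0 < lam t := hlam₀.trans_le (hlam t ht)
  refine tendsto_order.2 ⟨fun a ha => ?_, fun b hb => ?_⟩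
  · obtain ⟨T, hT, hxT⟩ := exists_gt hx hlam₀ hlam hη hm hx0 ha
    filter_upwards [eventually_ge_atTop T] with t ht
    exact hxT.trans_le (monotoneOn hx hlam_pos hη hm hx0 hT (hT.trans ht) ht)
  · filter_upwards [eventually_ge_atTop 0] with t ht
    exact (le_of_initial_le hx hlam_pos hη hm hx0 t ht).trans_lt hb

end SIS

theorem stmt_10_general (c : ℝ) (lam mu : ℝ → ℝ)
    (lam₀ : ℝ) (hlam₀ : 0 < lam₀) (hlam : ∀ t : ℝ, lam₀ ≤ lam t)
    (η : ℝ) (hη : 0 < η)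
    (hratio : ∀ t ≥ (0 : ℝ), c + η ≤ mu t / lam t)
    (x : ℝ → ℝ)
    (hx : ∀ t ≥ (0 : ℝ),
      HasDerivAt x (lam t * (x t - mu t / lam t) * (x t - c)) t)
    (hx0 : x 0 ∈ Icc (0 : ℝ) c) :
    (∀ t ≥ (0 : ℝ), x t ∈ Icc (0 : ℝ) c) ∧
    MonotoneOn x (Ici (0 : ℝ)) ∧
    Tendsto x atTop (nhds c) := by
  have hlam_pos : ∀ t ≥ 0, 0 < lam t := fun t _ => hlam₀.trans_le (hlam t)
  have hmono := SIS.monotoneOn hx hlam_pos hη hratio hx0.2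
  refine ⟨fun t ht => ⟨hx0.1.trans (hmono self_mem_Ici ht ht),
    SIS.le_of_initial_le hx hlam_pos hη hratio hx0.2 t ht⟩, hmono, ?_⟩
  exact SIS.tendsto hx hlam₀ (fun t _ => hlam t) hη hratio hx0.2

/-- Case 2 of Theorem 3.2: for the nonautonomous SIS ODE
`x' = λ(t) (x − μ(t)/λ(t)) (x − c)` with `λ(t) ≥ λ₀ > 0` and `μ(t)/λ(t) ≥ c + η`
for all `t`, every trajectory starting in `[0, c]` stays in `[0, c]`, is
nondecreasing, and converges to `c`. -/
theorem stmt_10 (c : ℝ) (hc : 0 < c) (lam mu : ℝ → ℝ)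
    (hlamc : Continuous lam) (hmuc : Continuous mu)
    (lam₀ : ℝ) (hlam₀ : 0 < lam₀) (hlam : ∀ t : ℝ, lam₀ ≤ lam t)
    (η : ℝ) (hη : 0 < η)
    (hratio : ∀ t ≥ (0 : ℝ), c + η ≤ mu t / lam t)
    (x : ℝ → ℝ)
    (hx : ∀ t ≥ (0 : ℝ),
      HasDerivAt x (lam t * (x t - mu t / lam t) * (x t - c)) t)
    (hx0 : x 0 ∈ Icc (0 : ℝ) c) :
    (∀ t ≥ (0 : ℝ), x t ∈ Icc (0 : ℝ) c) ∧
    MonotoneOn x (Ici (0 : ℝ)) ∧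
    Tendsto x atTop (nhds c) :=
  stmt_10_general c lam mu lam₀ hlam₀ hlam η hη hratio x hx hx0
end

section
/- Let c > 0, let λ : [0,∞) → ℝ be continuous with λ(t) ≥ λ₀ > 0 for all t, and let x : [0,∞) → ℝ be differentiable with x'(t) = λ(t) x(t) (x(t) − c) for all t ≥ 0 and x(0) ∈ [0, c). Then x(t) ∈ [0, c) for all t, x is nonincreasing, and x(t) → 0 as t → ∞. -/
open Set Filter

/-!
The equation is of Bernoulli type: `y = 1 / x` solves the linear equation `y' = λ (c y - 1)`.
Hence, with `Λ(t) = ∫₀ᵗ λ` and `a = x(0) / (c - x(0))`, the curve `c a / (a + exp (c Λ(t)))`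
solves the equation with initial value `x(0)`. The right-hand side is locally Lipschitz in `x`,
so this curve is `x` on `[0, ∞)`. As `Λ` is increasing with `Λ(t) ≥ λ₀ t`, the closed form
stays in `[0, c)`, is nonincreasing and tends to `0`.
-/

section Uniqueness

variable {E : Type*} [NormedAddCommGroup E] [NormedSpace ℝ E]

theorem ODE_solution_unique_smul_of_locallyLipschitz {p : E → E} (hp : LocallyLipschitz p)
    {lam : ℝ → ℝ} {f g : ℝ → E} {a b : ℝ} (hlam : ContinuousOn lam (Icc a b))
    (hf : ContinuousOn f (Icc a b))
    (hf' : ∀ t ∈ Ico a b, HasDerivWithinAt f (lam t • p (f t)) (Ici t) t)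
    (hg : ContinuousOn g (Icc a b))
    (hg' : ∀ t ∈ Ico a b, HasDerivWithinAt g (lam t • p (g t)) (Ici t) t)
    (ha : f a = g a) : EqOn f g (Icc a b) := by
  obtain ⟨K, hK⟩ := hp.locallyLipschitzOn.exists_lipschitzOnWith_of_compact
    ((isCompact_Icc.image_of_continuousOn hf).union (isCompact_Icc.image_of_continuousOn hg))
  obtain ⟨M, hM⟩ := isCompact_Icc.exists_bound_of_continuousOn hlam
  have hv : ∀ t ∈ Ico a b, LipschitzOnWith (M.toNNReal * K) (fun y ↦ lam t • p y)
      (f '' Icc a b ∪ g '' Icc a b) := fun t ht ↦ by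
    refine ((lipschitzWith_smul (lam t)).comp_lipschitzOnWith hK).weaken
      (mul_le_mul_of_nonneg_right ?_ K.2)
    rw [← NNReal.coe_le_coe, coe_nnnorm, Real.coe_toNNReal']
    exact (hM t (Ico_subset_Icc_self ht)).trans (le_max_left _ _)
  exact ODE_solution_unique_of_mem_Icc_right hv hf hf'
    (fun t ht ↦ .inl (mem_image_of_mem f (Ico_subset_Icc_self ht))) hg hg'
    (fun t ht ↦ .inr (mem_image_of_mem g (Ico_subset_Icc_self ht))) ha

theorem ODE_solution_unique_Ici_smul_of_locallyLipschitz {p : E → E} (hp : LocallyLipschitz p)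
    {lam : ℝ → ℝ} {f g : ℝ → E} {a : ℝ} (hlam : Continuous lam)
    (hf : ∀ t ≥ a, HasDerivAt f (lam t • p (f t)) t)
    (hg : ∀ t ≥ a, HasDerivAt g (lam t • p (g t)) t)
    (ha : f a = g a) : EqOn f g (Ici a) := fun _ hT ↦
  ODE_solution_unique_smul_of_locallyLipschitz hp hlam.continuousOn
    (fun t ht ↦ (hf t ht.1).continuousAt.continuousWithinAt)
    (fun t ht ↦ (hf t ht.1).hasDerivWithinAt)
    (fun t ht ↦ (hg t ht.1).continuousAt.continuousWithinAt)
    (fun t ht ↦ (hg t ht.1).hasDerivWithinAt) ha ⟨hT, le_rfl⟩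

end Uniqueness

section LogisticCurve

open Real

noncomputable def logisticCurve (c a : ℝ) (Λ : ℝ → ℝ) (t : ℝ) : ℝ :=
  c * a / (a + exp (c * Λ t))

variable {c a : ℝ} {Λ : ℝ → ℝ}

theorem hasDerivAt_logisticCurve {lam : ℝ → ℝ} {t : ℝ} (hΛ : HasDerivAt Λ (lam t) t)
    (ha : 0 ≤ a) :
    HasDerivAt (logisticCurve c a Λ)
      (lam t * logisticCurve c a Λ t * (logisticCurve c a Λ t - c)) t := by
  have hpos : 0 < a + exp (c * Λ t) := by positivity
  refine (((hΛ.const_mul c).exp.const_add a).fun_inv hpos.ne').const_mul (c * a)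
    |>.congr_deriv ?_
  unfold logisticCurve
  field_simp
  ring

theorem logisticCurve_mem_Ico (hc : 0 < c) (ha : 0 ≤ a) (t : ℝ) :
    logisticCurve c a Λ t ∈ Ico 0 c := by
  have hpos : 0 < a + exp (c * Λ t) := by positivity
  refine ⟨by unfold logisticCurve; positivity, ?_⟩
  rw [logisticCurve, div_lt_iff₀ hpos]
  nlinarith [exp_pos (c * Λ t)]

theorem logisticCurve_antitone (hc : 0 ≤ c) (ha : 0 ≤ a) (hΛ : Monotone Λ) :
    Antitone (logisticCurve c a Λ) := fun s t hst ↦ by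
  unfold logisticCurve
  gcongr
  exact hΛ hst

theorem tendsto_logisticCurve_atTop (hc : 0 < c) (hΛ : Tendsto Λ atTop atTop) :
    Tendsto (logisticCurve c a Λ) atTop (nhds 0) :=
  tendsto_const_nhds.div_atTop <| tendsto_atTop_add_const_left _ a <|
    tendsto_exp_atTop.comp (hΛ.const_mul_atTop hc)

theorem logisticCurve_zero {x₀ : ℝ} (hc : c ≠ 0) (hx₀ : x₀ ≠ c) (hΛ : Λ 0 = 0) :
    logisticCurve c (x₀ / (c - x₀)) Λ 0 = x₀ := by
  have : c - x₀ ≠ 0 := sub_ne_zero.2 hx₀.symm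
  rw [logisticCurve, hΛ, mul_zero, exp_zero, div_add_one this, add_sub_cancel, mul_div_assoc',
    div_div_div_cancel_right₀ this, mul_div_cancel_left₀ _ hc]

end LogisticCurve

theorem tendsto_integral_atTop_of_le {lam : ℝ → ℝ} (hlam : Continuous lam) {lam₀ : ℝ}
    (hlam₀ : 0 < lam₀) (hle : ∀ t, lam₀ ≤ lam t) :
    Tendsto (fun t ↦ ∫ s in (0 : ℝ)..t, lam s) atTop atTop := by
  refine tendsto_atTop_mono' atTop ?_ (tendsto_id.atTop_mul_const hlam₀)
  filter_upwards [eventually_ge_atTop 0] with t ht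
  simpa using intervalIntegral.integral_mono_on ht
    (intervalIntegrable_const (μ := MeasureTheory.volume)) (hlam.intervalIntegrable 0 t)
    fun s _ ↦ hle s

/-- Case 4 of Theorem 3.2 (`μ ≡ 0`): for the nonautonomous ODE
`x' = λ(t) x (x − c)` with `λ(t) ≥ λ₀ > 0`, every trajectory starting in `[0, c)`
stays in `[0, c)`, is nonincreasing, and converges to `0`. -/
theorem stmt_11 (c : ℝ) (hc : 0 < c) (lam : ℝ → ℝ)
    (hlamc : Continuous lam)
    (lam₀ : ℝ) (hlam₀ : 0 < lam₀) (hlam : ∀ t : ℝ, lam₀ ≤ lam t)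
    (x : ℝ → ℝ)
    (hx : ∀ t ≥ (0 : ℝ), HasDerivAt x (lam t * x t * (x t - c)) t)
    (hx0 : x 0 ∈ Ico (0 : ℝ) c) :
    (∀ t ≥ (0 : ℝ), x t ∈ Ico (0 : ℝ) c) ∧
    AntitoneOn x (Ici (0 : ℝ)) ∧
    Tendsto x atTop (nhds 0) := by
  set Λ := fun t ↦ ∫ s in (0 : ℝ)..t, lam s
  have hΛ (t : ℝ) : HasDerivAt Λ (lam t) t := (hlamc.integral_hasStrictDerivAt 0 t).hasDerivAt
  have ha : 0 ≤ x 0 / (c - x 0) := div_nonneg hx0.1 (sub_nonneg.2 hx0.2.le)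
  set z := logisticCurve c (x 0 / (c - x 0)) Λ
  have hxz : EqOn x z (Ici 0) := by
    refine ODE_solution_unique_Ici_smul_of_locallyLipschitz (p := fun y ↦ y * (y - c))
      (ContDiff.locallyLipschitz (𝕂 := ℝ) (by fun_prop)) hlamc
      (fun t ht ↦ (hx t ht).congr_deriv (by simp only [smul_eq_mul]; ring))
      (fun t _ ↦
        (hasDerivAt_logisticCurve (hΛ t) ha).congr_deriv (by simp only [smul_eq_mul]; ring))
      (logisticCurve_zero hc.ne' hx0.2.ne intervalIntegral.integral_same).symm
  have hz_anti : Antitone z := logisticCurve_antitone hc.le ha <|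
    monotone_of_hasDerivAt_nonneg hΛ fun t ↦ hlam₀.le.trans (hlam t)
  refine ⟨fun t ht ↦ hxz ht ▸ logisticCurve_mem_Ico hc ha t,
    (hz_anti.antitoneOn _).congr hxz.symm, ?_⟩
  refine Tendsto.congr' ?_ <| tendsto_logisticCurve_atTop (a := x 0 / (c - x 0)) hc
    (tendsto_integral_atTop_of_le hlamc hlam₀ hlam)
  filter_upwards [eventually_ge_atTop 0] with t ht using (hxz ht).symm
end

section
/- Let c > 0, ε > 0, and x* ∈ [0, c). For every ε > 0 there exists δ̂ > 0 such that the following holds: if λ : [0,∞) → ℝ is continuous with λ(t) > δ̂ for all t, and x : [0,∞) → ℝ is differentiable with x'(t) = λ(t)(x(t) − x*)(x(t) − c) for all t ≥ 0 and 0 ≤ x(0) < c − ε, then |x(t) − x*| < ε for all sufficiently large t. -/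
/-!
Both `x - x*` and `c - x` solve scalar linear equations `w' = g w`, hence equal their initial
value times `exp (∫₀ᵗ g)`. This pins the sign of `x - x*`: below `x*` the trajectory stays below
`x*`, and above `x*` the coefficient `λ (x - x*)` of `c - x` is nonnegative, so `x` decreases.
Either way `x ≤ max x* (x 0) < c`, so the coefficient `λ (x - c)` of `x - x*` is bounded above
by `-δ (c - max x* (x 0)) < 0`, and `x - x*` decays exponentially.
-/

open Set Filter Topology Real intervalIntegral

section LinearODE

variable {g w : ℝ → ℝ} {a : ℝ}

theorem linear_ode_eq_mul_exp_integral (hg : ContinuousOn g (Ici a))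
    (hw : ∀ t ≥ a, HasDerivAt w (g t * w t) t) {t : ℝ} (ht : a ≤ t) :
    w t = w a * exp (∫ s in a..t, g s) := by
  set G : ℝ → ℝ := fun t => ∫ s in a..t, g s
  have hG : ∀ s ∈ Ico a t, HasDerivWithinAt G (g s) (Ici s) s := fun s hs =>
    integral_hasDerivWithinAt_right
      ((hg.mono fun u hu => (uIcc_of_le hs.1 ▸ hu).1).intervalIntegrable)
      ⟨Ici a, mem_of_superset self_mem_nhdsWithin fun u hu => hs.1.trans hu.le,
        hg.aestronglyMeasurable measurableSet_Ici⟩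
      ((hg s hs.1).mono fun u hu => hs.1.trans hu.le)
  have hGcont : ContinuousOn G (Icc a t) := by
    rw [← uIcc_of_le ht]
    exact continuousOn_primitive_interval
      ((hg.mono fun u hu => (uIcc_of_le ht ▸ hu).1).integrableOn_compact isCompact_uIcc)
  -- `exp (-G)` is an integrating factor.
  have hconst := constant_of_has_deriv_right_zero (f := fun s => w s * exp (-G s))
    ((HasDerivAt.continuousOn fun s hs => hw s hs.1).mul hGcont.neg.rexp)
    (fun s hs => ((hw s hs.1).hasDerivWithinAt.mul (hG s hs).neg.exp).congr_deriv (by ring))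
    t ⟨ht, le_rfl⟩
  simp only [G, integral_same, neg_zero, exp_zero, mul_one, exp_neg] at hconst
  rw [← hconst, inv_mul_cancel_right₀ (exp_pos _).ne']

theorem abs_le_mul_exp_of_linear_ode (hg : ContinuousOn g (Ici a))
    (hw : ∀ t ≥ a, HasDerivAt w (g t * w t) t) {r : ℝ} (hgr : ∀ t ≥ a, g t ≤ -r) {t : ℝ}
    (ht : a ≤ t) : |w t| ≤ |w a| * exp (-(r * (t - a))) := by
  have hint : ∫ s in a..t, g s ≤ -(r * (t - a)) :=
    calc ∫ s in a..t, g s ≤ ∫ _ in a..t, -r :=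
          integral_mono_on ht ((hg.mono fun u hu => (uIcc_of_le ht ▸ hu).1).intervalIntegrable)
            intervalIntegrable_const fun s hs => hgr s hs.1
      _ = -(r * (t - a)) := by simp only [integral_const, smul_eq_mul]; ring
  rw [linear_ode_eq_mul_exp_integral hg hw ht, abs_mul, abs_of_pos (exp_pos _)]
  gcongr

theorem tendsto_zero_of_linear_ode (hg : ContinuousOn g (Ici a))
    (hw : ∀ t ≥ a, HasDerivAt w (g t * w t) t) {r : ℝ} (hr : 0 < r) (hgr : ∀ t ≥ a, g t ≤ -r) :
    Tendsto w atTop (𝓝 0) := by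
  have hbound : Tendsto (fun t => |w a| * exp (-(r * (t - a)))) atTop (𝓝 0) := by
    simpa [sub_eq_add_neg] using ((tendsto_exp_atBot.comp (tendsto_neg_atTop_atBot.comp
      ((tendsto_atTop_add_const_right _ (-a) tendsto_id).const_mul_atTop hr))).const_mul |w a|)
  refine squeeze_zero_norm' ?_ hbound
  filter_upwards [eventually_ge_atTop a] with t ht
  exact abs_le_mul_exp_of_linear_ode hg hw hgr ht

end LinearODE

section SIS

variable {c xstar : ℝ} {lam x : ℝ → ℝ}

theorem sis_hasDerivAt_sub_xstar
    (hx : ∀ t ≥ (0 : ℝ), HasDerivAt x (lam t * (x t - xstar) * (x t - c)) t) {t : ℝ}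
    (ht : 0 ≤ t) : HasDerivAt (fun t => x t - xstar) (lam t * (x t - c) * (x t - xstar)) t :=
  ((hx t ht).sub_const xstar).congr_deriv (by ring)

theorem sis_continuousOn_coeff (hlam : Continuous lam) {y : ℝ}
    (hx : ∀ t ≥ (0 : ℝ), HasDerivAt x (lam t * (x t - xstar) * (x t - c)) t) :
    ContinuousOn (fun t => lam t * (x t - y)) (Ici 0) :=
  hlam.continuousOn.mul ((HasDerivAt.continuousOn fun t ht => hx t ht).sub continuousOn_const)

theorem sis_sub_xstar_eq (hlam : Continuous lam)
    (hx : ∀ t ≥ (0 : ℝ), HasDerivAt x (lam t * (x t - xstar) * (x t - c)) t) {t : ℝ}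
    (ht : 0 ≤ t) : x t - xstar = (x 0 - xstar) * exp (∫ s in 0..t, lam s * (x s - c)) :=
  linear_ode_eq_mul_exp_integral (w := fun t => x t - xstar) (sis_continuousOn_coeff hlam hx)
    (fun _ hs => sis_hasDerivAt_sub_xstar hx hs) ht

theorem sis_const_sub_eq (hlam : Continuous lam)
    (hx : ∀ t ≥ (0 : ℝ), HasDerivAt x (lam t * (x t - xstar) * (x t - c)) t) {t : ℝ}
    (ht : 0 ≤ t) : c - x t = (c - x 0) * exp (∫ s in 0..t, lam s * (x s - xstar)) :=
  linear_ode_eq_mul_exp_integral (w := fun t => c - x t) (sis_continuousOn_coeff hlam hx)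
    (fun s hs => ((hx s hs).const_sub c).congr_deriv (by ring)) ht

theorem sis_le_max (hlam : Continuous lam) (hlam_nonneg : ∀ t, 0 ≤ lam t)
    (hx : ∀ t ≥ (0 : ℝ), HasDerivAt x (lam t * (x t - xstar) * (x t - c)) t) (hx0 : x 0 ≤ c)
    {t : ℝ} (ht : 0 ≤ t) : x t ≤ max xstar (x 0) := by
  rcases le_or_gt (x 0) xstar with hle | hlt
  · have hsub := sis_sub_xstar_eq hlam hx ht
    have : (x 0 - xstar) * exp (∫ s in 0..t, lam s * (x s - c)) ≤ 0 :=
      mul_nonpos_of_nonpos_of_nonneg (sub_nonpos.2 hle) (exp_pos _).le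
    exact le_max_of_le_left (by linarith)
  · have habove : ∀ s ≥ 0, xstar < x s := fun s hs => by
      have := mul_pos (sub_pos.2 hlt) (exp_pos (∫ u in 0..s, lam u * (x u - c)))
      linarith [sis_sub_xstar_eq hlam hx hs]
    have hF : 0 ≤ ∫ s in 0..t, lam s * (x s - xstar) := integral_nonneg ht fun s hs =>
      mul_nonneg (hlam_nonneg s) (sub_pos.2 (habove s hs.1)).le
    have : c - x 0 ≤ c - x t := by
      rw [sis_const_sub_eq hlam hx ht]
      exact le_mul_of_one_le_right (sub_nonneg.2 hx0) (one_le_exp hF)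
    exact le_max_of_le_right (by linarith)

theorem sis_tendsto_xstar (hlam : Continuous lam) {δ : ℝ} (hδ : 0 < δ) (hlamδ : ∀ t, δ ≤ lam t)
    (hx : ∀ t ≥ (0 : ℝ), HasDerivAt x (lam t * (x t - xstar) * (x t - c)) t) (hx0 : x 0 < c)
    (hxstar : xstar < c) : Tendsto x atTop (𝓝 xstar) := by
  have hM : max xstar (x 0) < c := max_lt hxstar hx0
  have hcoeff : ∀ t ≥ (0 : ℝ), lam t * (x t - c) ≤ -(δ * (c - max xstar (x 0))) := by
    intro t ht
    have hxt := sis_le_max hlam (fun s => hδ.le.trans (hlamδ s)) hx hx0.le ht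
    calc lam t * (x t - c) ≤ δ * (x t - c) :=
          mul_le_mul_of_nonpos_right (hlamδ t) (by linarith)
      _ ≤ δ * (max xstar (x 0) - c) := by gcongr
      _ = -(δ * (c - max xstar (x 0))) := by ring
  have hdecay : Tendsto (fun t => x t - xstar) atTop (𝓝 0) :=
    tendsto_zero_of_linear_ode (sis_continuousOn_coeff hlam hx)
      (fun _ ht => sis_hasDerivAt_sub_xstar hx ht) (mul_pos hδ (sub_pos.2 hM)) hcoeff
  simpa using hdecay.add_const xstar

end SIS

theorem stmt_13_general (c : ℝ) (xstar : ℝ) (hxstar : xstar ∈ Ico (0 : ℝ) c) :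
    ∀ ε > (0 : ℝ), ∃ δhat > (0 : ℝ),
      ∀ (lam : ℝ → ℝ) (x : ℝ → ℝ),
        Continuous lam → (∀ t : ℝ, δhat < lam t) →
        (∀ t ≥ (0 : ℝ), HasDerivAt x (lam t * (x t - xstar) * (x t - c)) t) →
        0 ≤ x 0 → x 0 < c - ε →
        ∀ᶠ t in atTop, |x t - xstar| < ε := by
  intro ε hε
  refine ⟨1, one_pos, fun lam x hlam hlam_gt hx _ hx0 => ?_⟩
  have hlim := sis_tendsto_xstar hlam one_pos (fun t => (hlam_gt t).le) hx (by linarith) hxstar.2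
  simpa only [Real.dist_eq] using Metric.tendsto_nhds.mp hlim ε hε

/-- Lemma 3.4: for the controlled SIS ODE `x' = λ(t) (x − x*) (x − c)` with ideal state
`x* ∈ [0, c)`, for every `ε > 0` there is `δ̂ > 0` such that whenever `λ(t) > δ̂` for all
`t` and `0 ≤ x(0) < c − ε`, the trajectory satisfies `|x(t) − x*| < ε` for all
sufficiently large `t`. -/
theorem stmt_13 (c : ℝ) (hc : 0 < c) (xstar : ℝ) (hxstar : xstar ∈ Ico (0 : ℝ) c) :
    ∀ ε > (0 : ℝ), ∃ δhat > (0 : ℝ),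
      ∀ (lam : ℝ → ℝ) (x : ℝ → ℝ),
        Continuous lam → (∀ t : ℝ, δhat < lam t) →
        (∀ t ≥ (0 : ℝ), HasDerivAt x (lam t * (x t - xstar) * (x t - c)) t) →
        0 ≤ x 0 → x 0 < c - ε →
        ∀ᶠ t in atTop, |x t - xstar| < ε :=
  stmt_13_general c xstar hxstar
end

section
/- Let c > 0, ε > 0, x* ∈ [0, c − ε], and let λ : [0,∞) → ℝ be continuous with λ(t) > 0 for all t. Let x : [0,∞) → ℝ be differentiable with x'(t) = λ(t)(x(t) − x*)(x(t) − c) for all t ≥ 0 and x(0) ∈ [0, c − ε]. Then x(t) ∈ [0, c − ε] for all t ≥ 0 and |x(t) − x*| ≤ |x(0) − x*| · exp(−ε ∫₀ᵗ λ(s) ds) for all t ≥ 0. -/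
open Set Filter

/-!
The interval `[0, c − ε]` is invariant because the vector field points inward just outside it:
below `0` both factors `x − x*` and `x − c` are negative, and just above `c − ε` they have
opposite signs. Inside the interval `y = x − x*` solves the linear equation `y' = λ (x − c) y`
whose coefficient is at most `−ε λ`, and so `y² · exp (2ε ∫ λ)` is nonincreasing.
-/

theorem le_of_hasDerivAt_neg_of_mem_Ioo {f f' : ℝ → ℝ} {t₀ b b' : ℝ} (hbb' : b < b')
    (hf : ∀ t ≥ t₀, HasDerivAt f (f' t) t) (h₀ : f t₀ ≤ b)
    (hneg : ∀ t ≥ t₀, f t ∈ Ioo b b' → f' t < 0) :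
    ∀ t ≥ t₀, f t ≤ b := by
  have barrier : ∀ δ, 0 < δ → δ < b' - b → ∀ t ≥ t₀, f t ≤ b + δ := by
    intro δ hδ hδb' t ht
    refine image_le_of_deriv_right_lt_deriv_boundary' (B := fun _ => b + δ) (B' := 0)
      (fun s hs => (hf s hs.1).continuousAt.continuousWithinAt)
      (fun s hs => (hf s hs.1).hasDerivWithinAt) (by linarith) continuousOn_const
      (fun _ _ => hasDerivWithinAt_const _ _ _) (fun s hs hfs => ?_) ⟨ht, le_rfl⟩
    exact hneg s hs.1 ⟨by simp only [hfs]; linarith, by simp only [hfs]; linarith⟩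
  intro t ht
  by_contra! hbt
  have := barrier (min (f t - b) (b' - b) / 2) (by positivity)
    (by linarith [min_le_right (f t - b) (b' - b)]) t ht
  linarith [min_le_left (f t - b) (b' - b)]

theorem abs_le_abs_mul_exp_of_hasDerivAt_mul {y a B b : ℝ → ℝ} {t₀ : ℝ}
    (hy : ∀ t ≥ t₀, HasDerivAt y (a t * y t) t) (hB : ∀ t ≥ t₀, HasDerivAt B (b t) t)
    (hab : ∀ t ≥ t₀, a t ≤ b t) :
    ∀ t ≥ t₀, |y t| ≤ |y t₀| * Real.exp (B t - B t₀) := by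
  set g : ℝ → ℝ := fun t => y t ^ 2 * Real.exp (-(2 * B t))
  have hg : ∀ t ≥ t₀, HasDerivAt g (2 * y t ^ 2 * Real.exp (-(2 * B t)) * (a t - b t)) t :=
    fun t ht => ((hy t ht).pow 2).mul ((hB t ht).const_mul 2).neg.exp |>.congr_deriv
      (by simp only [Pi.neg_apply, Pi.pow_apply]; push_cast; ring)
  have hanti : AntitoneOn g (Ici t₀) := by
    refine antitoneOn_of_hasDerivWithinAt_nonpos (convex_Ici t₀)
      (fun t ht => (hg t ht).continuousAt.continuousWithinAt)
      (fun t ht => (hg t (interior_subset ht)).hasDerivWithinAt) fun t ht => ?_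
    exact mul_nonpos_of_nonneg_of_nonpos (by positivity)
      (sub_nonpos.2 (hab t (interior_subset ht)))
  intro t ht
  have hgt : g t ≤ g t₀ := hanti self_mem_Ici ht ht
  refine abs_le_of_sq_le_sq ?_ (by positivity)
  have hexp : Real.exp (B t - B t₀) ^ 2 = Real.exp (-(2 * B t₀)) / Real.exp (-(2 * B t)) := by
    rw [← Real.exp_nat_mul, ← Real.exp_sub]
    ring_nf
  rw [mul_pow, sq_abs, hexp, mul_div_assoc', le_div_iff₀ (Real.exp_pos _)]
  exact hgt

/-- Quantitative comparison bound in the proof of Lemma 3.4: for the controlled SIS ODE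
`x' = λ(t) (x − x*) (x − c)` with `x* ∈ [0, c − ε]` and `x(0) ∈ [0, c − ε]`, the trajectory
stays in `[0, c − ε]` and satisfies
`|x(t) − x*| ≤ |x(0) − x*| · exp (−ε ∫₀ᵗ λ(s) ds)`. -/
theorem stmt_14 (c ε : ℝ) (hc : 0 < c) (hε : 0 < ε)
    (xstar : ℝ) (hxstar : xstar ∈ Icc (0 : ℝ) (c - ε))
    (lam : ℝ → ℝ) (hlamc : Continuous lam) (hlam : ∀ t : ℝ, 0 < lam t)
    (x : ℝ → ℝ)
    (hx : ∀ t ≥ (0 : ℝ), HasDerivAt x (lam t * (x t - xstar) * (x t - c)) t)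
    (hx0 : x 0 ∈ Icc (0 : ℝ) (c - ε)) :
    ∀ t ≥ (0 : ℝ), x t ∈ Icc (0 : ℝ) (c - ε) ∧
      |x t - xstar| ≤ |x 0 - xstar| * Real.exp (-(ε * ∫ s in (0 : ℝ)..t, lam s)) := by
  have lower : ∀ t ≥ (0 : ℝ), -x t ≤ 0 :=
    le_of_hasDerivAt_neg_of_mem_Ioo hc (fun t ht => (hx t ht).neg) (by linarith [hx0.1])
      fun t _ hxt => neg_neg_of_pos <| mul_pos_of_neg_of_neg
        (mul_neg_of_pos_of_neg (hlam t) (by linarith [hxt.1, hxstar.1])) (by linarith [hxt.1])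
  have upper : ∀ t ≥ (0 : ℝ), x t ≤ c - ε :=
    le_of_hasDerivAt_neg_of_mem_Ioo (b' := c) (by linarith) hx hx0.2
      fun t _ hxt => mul_neg_of_pos_of_neg (mul_pos (hlam t) (by linarith [hxt.1, hxstar.2]))
        (by linarith [hxt.2])
  have decay := abs_le_abs_mul_exp_of_hasDerivAt_mul (y := fun t => x t - xstar)
    (a := fun t => lam t * (x t - c)) (B := fun t => -(ε * ∫ s in (0 : ℝ)..t, lam s))
    (b := fun t => -(ε * lam t))
    (fun t ht => ((hx t ht).sub_const xstar).congr_deriv (by ring))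
    (fun t _ => ((hlamc.integral_hasStrictDerivAt 0 t).hasDerivAt.const_mul ε).neg)
    (fun t ht => by nlinarith [hlam t, upper t ht])
  intro t ht
  refine ⟨⟨by linarith [lower t ht], upper t ht⟩, ?_⟩
  simpa using decay t ht
end

section
/- Let λ, μ : [0,∞) → ℝ be continuous and nonnegative and y₀ ∈ [0,1], and let Y : [0,∞) → ℝ be differentiable with Y'(t) = λ(t)(1 − Y(t))Y(t) − μ(t)Y(t) for all t ≥ 0 and Y(0) = y₀. Then Y(t) ∈ [0,1] for all t ≥ 0, and v(t) := (Y(t), Y(t)²) is the unique solution on [0,∞) with nonnegative second component of the system v₁'(t) = λ(t)(v₁(t) − v₂(t)) − μ(t)v₁(t), v₂'(t) = 2λ(t)(v₂(t) − v₂(t)^{3/2}) − 2μ(t)v₂(t), with initial condition v(0) = (y₀, y₀²). -/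
/-!
`Y` and `1 - Y` solve linear equations `z' = c(t) z + r(t)` with `r ≥ 0`, so an integrating
factor keeps both nonnegative. Since `Y ≥ 0`, `(Y²)^{3/2} = Y³` and the chain rule shows that
`(Y, Y²)` solves the auxiliary system. Uniqueness among solutions with `v₂ ≥ 0` is the Lipschitz
uniqueness theorem for ODEs: on a compact time interval `[0, T]` any such solution stays in
`ℝ × [0, R]` for some `R`, and `x ↦ x^{3/2}` is Lipschitz on `[0, R]`.
-/

open Set

lemma rpow_three_halves_sq {x : ℝ} (hx : 0 ≤ x) : (x ^ 2) ^ ((3 : ℝ) / 2) = x ^ 3 := by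
  rw [← Real.rpow_natCast x 2, ← Real.rpow_mul hx]
  norm_num

lemma abs_rpow_three_halves_sub_le {R x y : ℝ} (hx : x ∈ Icc 0 R) (hy : y ∈ Icc 0 R) :
    |x ^ ((3 : ℝ) / 2) - y ^ ((3 : ℝ) / 2)| ≤ 3 / 2 * √R * |x - y| := by
  have hderiv : ∀ z ∈ Icc 0 R, HasDerivWithinAt (fun z : ℝ => z ^ ((3 : ℝ) / 2))
      (3 / 2 * √z) (Icc 0 R) z := fun z _ => by
    refine (Real.hasDerivAt_rpow_const (Or.inr (by norm_num))).hasDerivWithinAt.congr_deriv ?_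
    rw [Real.sqrt_eq_rpow]; norm_num
  have hbound : ∀ z ∈ Icc 0 R, ‖3 / 2 * √z‖ ≤ 3 / 2 * √R := fun z hz => by
    rw [Real.norm_of_nonneg (by positivity)]
    gcongr
    exact hz.2
  simpa only [Real.norm_eq_abs] using
    (convex_Icc 0 R).norm_image_sub_le_of_norm_hasDerivWithin_le hderiv hbound hy hx

theorem nonneg_of_hasDerivAt_eq_mul_add {a : ℝ} {c r Y : ℝ → ℝ} (hc : ContinuousOn c (Ici a))
    (hY : ∀ t ≥ a, HasDerivAt Y (c t * Y t + r t) t) (hr : ∀ t ≥ a, 0 ≤ r t) (ha : 0 ≤ Y a) :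
    ∀ t ≥ a, 0 ≤ Y t := by
  -- integrating factor: `Y * exp (-∫ c)` is nondecreasing
  have hc' : Continuous fun s => c (max a s) :=
    hc.comp_continuous (continuous_const.max continuous_id) fun s => le_max_left a s
  set C : ℝ → ℝ := fun u => ∫ s in a..u, c (max a s)
  have hC : ∀ t ≥ a, HasDerivAt C (c t) t := fun t ht => by
    simpa [max_eq_right ht] using
      intervalIntegral.integral_hasDerivAt_right (hc'.intervalIntegrable a t)
        (hc'.stronglyMeasurableAtFilter _ _) hc'.continuousAt
  have hu : ∀ t ≥ a, HasDerivAt (fun s => Y s * Real.exp (-C s)) (r t * Real.exp (-C t)) t :=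
    fun t ht => ((hY t ht).mul (hC t ht).neg.exp).congr_deriv (by simp only [Pi.neg_apply]; ring)
  intro t ht
  have hmono : MonotoneOn (fun s => Y s * Real.exp (-C s)) (Icc a t) := by
    refine monotoneOn_of_deriv_nonneg (convex_Icc a t)
      (fun s hs => (hu s hs.1).continuousAt.continuousWithinAt) (fun s hs => ?_) fun s hs => ?_
    all_goals rw [interior_Icc] at hs
    · exact (hu s hs.1.le).differentiableAt.differentiableWithinAt
    · rw [(hu s hs.1.le).deriv]
      exact mul_nonneg (hr s hs.1.le) (Real.exp_pos _).le
  have := hmono (left_mem_Icc.2 ht) (right_mem_Icc.2 ht) ht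
  simp only [C, intervalIntegral.integral_same, neg_zero, Real.exp_zero, mul_one] at this
  exact nonneg_of_mul_nonneg_left (ha.trans this) (Real.exp_pos _)

/-- The right-hand side of the auxiliary system (secondode) solved by `(Y, Y²)`. -/
noncomputable def sisAuxField (lam mu : ℝ → ℝ) (t : ℝ) (v : ℝ × ℝ) : ℝ × ℝ :=
  (lam t * (v.1 - v.2) - mu t * v.1, 2 * lam t * (v.2 - v.2 ^ ((3 : ℝ) / 2)) - 2 * mu t * v.2)

lemma lipschitzOnWith_sisAuxField {lam mu : ℝ → ℝ} {t Λ M : ℝ} (R : ℝ) (hlam : |lam t| ≤ Λ)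
    (hmu : |mu t| ≤ M) :
    LipschitzOnWith (2 * Λ * (1 + 3 / 2 * √R) + 2 * M).toNNReal (sisAuxField lam mu t)
      (univ ×ˢ Icc 0 R) := by
  have hΛ : 0 ≤ Λ := (abs_nonneg _).trans hlam
  have hM : 0 ≤ M := (abs_nonneg _).trans hmu
  refine LipschitzOnWith.of_dist_le_mul fun v hv w hw => ?_
  rw [Real.coe_toNNReal _ (by positivity), Prod.dist_eq, Prod.dist_eq]
  simp only [sisAuxField, Real.dist_eq]
  set d := max |v.1 - w.1| |v.2 - w.2|
  have h₁ : |v.1 - w.1| ≤ d := le_max_left _ _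
  have h₂ : |v.2 - w.2| ≤ d := le_max_right _ _
  have hpow := abs_rpow_three_halves_sub_le hv.2 hw.2
  have hd : 0 ≤ d := (abs_nonneg _).trans h₁
  have hL : 0 ≤ √R := Real.sqrt_nonneg R
  refine max_le ?_ ?_
  · calc |lam t * (v.1 - v.2) - mu t * v.1 - (lam t * (w.1 - w.2) - mu t * w.1)|
        = |lam t * ((v.1 - w.1) - (v.2 - w.2)) - mu t * (v.1 - w.1)| := by ring_nf
      _ ≤ |lam t| * (|v.1 - w.1| + |v.2 - w.2|) + |mu t| * |v.1 - w.1| := by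
        grw [abs_sub, abs_mul, abs_mul, abs_sub]
      _ ≤ Λ * (d + d) + M * d := by gcongr
      _ ≤ _ := by nlinarith [mul_nonneg hΛ (mul_nonneg hL hd)]
  · calc |2 * lam t * (v.2 - v.2 ^ ((3 : ℝ) / 2)) - 2 * mu t * v.2 -
          (2 * lam t * (w.2 - w.2 ^ ((3 : ℝ) / 2)) - 2 * mu t * w.2)|
        = |2 * lam t * ((v.2 - w.2) - (v.2 ^ ((3 : ℝ) / 2) - w.2 ^ ((3 : ℝ) / 2)))
            - 2 * mu t * (v.2 - w.2)| := by ring_nf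
      _ ≤ 2 * |lam t| * (|v.2 - w.2| + |v.2 ^ ((3 : ℝ) / 2) - w.2 ^ ((3 : ℝ) / 2)|)
            + 2 * |mu t| * |v.2 - w.2| := by
        grw [abs_sub, abs_mul, abs_mul, abs_mul, abs_mul, abs_sub, abs_two]
      _ ≤ 2 * Λ * (d + 3 / 2 * √R * d) + 2 * M * d := by gcongr; grw [hpow, h₂]
      _ = _ := by ring

lemma exists_abs_le_on_Icc {f : ℝ → ℝ} {a b : ℝ} (hf : ContinuousOn f (Icc a b)) :
    ∃ C, ∀ t ∈ Icc a b, |f t| ≤ C := by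
  simpa only [Real.norm_eq_abs] using isCompact_Icc.exists_bound_of_continuousOn hf

theorem sisAuxField_solution_unique {lam mu : ℝ → ℝ} (hlam : Continuous lam)
    (hmu : Continuous mu) {f g : ℝ → ℝ × ℝ}
    (hf : ∀ t ≥ 0, HasDerivAt f (sisAuxField lam mu t (f t)) t) (hf₂ : ∀ t ≥ 0, 0 ≤ (f t).2)
    (hg : ∀ t ≥ 0, HasDerivAt g (sisAuxField lam mu t (g t)) t) (hg₂ : ∀ t ≥ 0, 0 ≤ (g t).2)
    (h0 : f 0 = g 0) : ∀ t ≥ 0, f t = g t := by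
  intro T hT
  have hfc : ContinuousOn f (Icc 0 T) := fun t ht => (hf t ht.1).continuousAt.continuousWithinAt
  have hgc : ContinuousOn g (Icc 0 T) := fun t ht => (hg t ht.1).continuousAt.continuousWithinAt
  obtain ⟨Λ, hΛ⟩ := exists_abs_le_on_Icc (a := 0) (b := T) hlam.continuousOn
  obtain ⟨M, hM⟩ := exists_abs_le_on_Icc (a := 0) (b := T) hmu.continuousOn
  obtain ⟨Rf, hRf⟩ := exists_abs_le_on_Icc (continuous_snd.comp_continuousOn hfc)
  obtain ⟨Rg, hRg⟩ := exists_abs_le_on_Icc (continuous_snd.comp_continuousOn hgc)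
  refine ODE_solution_unique_of_mem_Icc_right
    (fun t ht => lipschitzOnWith_sisAuxField (max Rf Rg) (hΛ t (Ico_subset_Icc_self ht))
      (hM t (Ico_subset_Icc_self ht)))
    hfc (fun t ht => (hf t ht.1).hasDerivWithinAt) (fun t ht => ?_)
    hgc (fun t ht => (hg t ht.1).hasDerivWithinAt) (fun t ht => ?_) h0 (right_mem_Icc.2 hT)
  · exact ⟨trivial, hf₂ t ht.1,
      (le_abs_self _).trans ((hRf t (Ico_subset_Icc_self ht)).trans (le_max_left _ _))⟩
  · exact ⟨trivial, hg₂ t ht.1,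
      (le_abs_self _).trans ((hRg t (Ico_subset_Icc_self ht)).trans (le_max_right _ _))⟩

theorem sis_mem_Icc {lam mu Y : ℝ → ℝ} (hlam : ContinuousOn lam (Ici 0))
    (hmu : ContinuousOn mu (Ici 0)) (hmu₀ : ∀ t ≥ 0, 0 ≤ mu t)
    (hY : ∀ t ≥ 0, HasDerivAt Y (lam t * (1 - Y t) * Y t - mu t * Y t) t) (hY0 : Y 0 ∈ Icc 0 1) :
    ∀ t ≥ 0, Y t ∈ Icc 0 1 := by
  have hYc : ContinuousOn Y (Ici 0) := fun t ht => (hY t ht).continuousAt.continuousWithinAt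
  have hY₀ : ∀ t ≥ 0, 0 ≤ Y t :=
    nonneg_of_hasDerivAt_eq_mul_add (c := fun t => lam t * (1 - Y t) - mu t) (r := 0)
      ((hlam.mul (continuousOn_const.sub hYc)).sub hmu)
      (fun t ht => (hY t ht).congr_deriv (by simp only [Pi.zero_apply]; ring))
      (fun _ _ => le_rfl) hY0.1
  have hY₁ : ∀ t ≥ 0, 0 ≤ 1 - Y t :=
    nonneg_of_hasDerivAt_eq_mul_add (c := fun t => -(lam t * Y t)) (hlam.mul hYc).neg
      (fun t ht => ((hY t ht).const_sub 1).congr_deriv (by ring))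
      (fun t ht => mul_nonneg (hmu₀ t ht) (hY₀ t ht)) (sub_nonneg.2 hY0.2)
  exact fun t ht => ⟨hY₀ t ht, sub_nonneg.1 (hY₁ t ht)⟩

lemma sis_hasDerivAt_and_hasDerivAt_sq {lam mu Y : ℝ → ℝ} {t : ℝ}
    (hY : HasDerivAt Y (lam t * (1 - Y t) * Y t - mu t * Y t) t) (hYt : 0 ≤ Y t) :
    HasDerivAt Y (lam t * (Y t - Y t ^ 2) - mu t * Y t) t ∧
      HasDerivAt (fun s => Y s ^ 2)
        (2 * lam t * (Y t ^ 2 - (Y t ^ 2) ^ ((3 : ℝ) / 2)) - 2 * mu t * Y t ^ 2) t :=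
  ⟨hY.congr_deriv (by ring), (hY.pow 2).congr_deriv (by rw [rpow_three_halves_sq hYt]; ring)⟩

theorem stmt_15_general (lam mu : ℝ → ℝ) (hlamc : Continuous lam) (hmuc : Continuous mu)
    (hmu : ∀ t : ℝ, 0 ≤ mu t)
    (y₀ : ℝ) (hy₀ : y₀ ∈ Icc (0 : ℝ) 1)
    (Y : ℝ → ℝ)
    (hY : ∀ t ≥ (0 : ℝ),
      HasDerivAt Y (lam t * (1 - Y t) * Y t - mu t * Y t) t)
    (hY0 : Y 0 = y₀) :
    (∀ t ≥ (0 : ℝ), Y t ∈ Icc (0 : ℝ) 1) ∧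
    (∀ t ≥ (0 : ℝ),
      HasDerivAt (fun s => Y s) (lam t * (Y t - Y t ^ 2) - mu t * Y t) t ∧
      HasDerivAt (fun s => Y s ^ 2)
        (2 * lam t * (Y t ^ 2 - (Y t ^ 2) ^ ((3 : ℝ) / 2)) - 2 * mu t * Y t ^ 2) t) ∧
    (∀ v₁ v₂ : ℝ → ℝ,
      v₁ 0 = y₀ → v₂ 0 = y₀ ^ 2 →
      (∀ t ≥ (0 : ℝ), 0 ≤ v₂ t) →
      (∀ t ≥ (0 : ℝ),
        HasDerivAt v₁ (lam t * (v₁ t - v₂ t) - mu t * v₁ t) t ∧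
        HasDerivAt v₂
          (2 * lam t * (v₂ t - v₂ t ^ ((3 : ℝ) / 2)) - 2 * mu t * v₂ t) t) →
      ∀ t ≥ (0 : ℝ), v₁ t = Y t ∧ v₂ t = Y t ^ 2) := by
  have hmem := sis_mem_Icc hlamc.continuousOn hmuc.continuousOn (fun t _ => hmu t) hY (hY0 ▸ hy₀)
  have hsys := fun t (ht : t ≥ 0) => sis_hasDerivAt_and_hasDerivAt_sq (hY t ht) (hmem t ht).1
  refine ⟨hmem, hsys, fun v₁ v₂ hv₁0 hv₂0 hv₂ hv t ht => ?_⟩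
  have := sisAuxField_solution_unique hlamc hmuc (f := fun s => (v₁ s, v₂ s))
    (g := fun s => (Y s, Y s ^ 2)) (fun t ht => (hv t ht).1.prodMk (hv t ht).2) hv₂
    (fun t ht => (hsys t ht).1.prodMk (hsys t ht).2) (fun t _ => sq_nonneg (Y t))
    (by simp only [hv₁0, hv₂0, hY0]) t ht
  exact Prod.ext_iff.1 this

/-- The limiting infected fraction `Y` of the time-varying mean-field SIS model stays in
`[0,1]`, and `v = (Y, Y²)` is the unique solution, with nonnegative second component, of the
auxiliary system `v₁' = λ(t)(v₁ − v₂) − μ(t)v₁`, `v₂' = 2λ(t)(v₂ − v₂^{3/2}) − 2μ(t)v₂`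
with initial condition `(y₀, y₀²)`. -/
theorem stmt_15 (lam mu : ℝ → ℝ) (hlamc : Continuous lam) (hmuc : Continuous mu)
    (hlam : ∀ t : ℝ, 0 ≤ lam t) (hmu : ∀ t : ℝ, 0 ≤ mu t)
    (y₀ : ℝ) (hy₀ : y₀ ∈ Icc (0 : ℝ) 1)
    (Y : ℝ → ℝ)
    (hY : ∀ t ≥ (0 : ℝ),
      HasDerivAt Y (lam t * (1 - Y t) * Y t - mu t * Y t) t)
    (hY0 : Y 0 = y₀) :
    (∀ t ≥ (0 : ℝ), Y t ∈ Icc (0 : ℝ) 1) ∧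
    (∀ t ≥ (0 : ℝ),
      HasDerivAt (fun s => Y s) (lam t * (Y t - Y t ^ 2) - mu t * Y t) t ∧
      HasDerivAt (fun s => Y s ^ 2)
        (2 * lam t * (Y t ^ 2 - (Y t ^ 2) ^ ((3 : ℝ) / 2)) - 2 * mu t * Y t ^ 2) t) ∧
    (∀ v₁ v₂ : ℝ → ℝ,
      v₁ 0 = y₀ → v₂ 0 = y₀ ^ 2 →
      (∀ t ≥ (0 : ℝ), 0 ≤ v₂ t) →
      (∀ t ≥ (0 : ℝ),
        HasDerivAt v₁ (lam t * (v₁ t - v₂ t) - mu t * v₁ t) t ∧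
        HasDerivAt v₂
          (2 * lam t * (v₂ t - v₂ t ^ ((3 : ℝ) / 2)) - 2 * mu t * v₂ t) t) →
      ∀ t ≥ (0 : ℝ), v₁ t = Y t ∧ v₂ t = Y t ^ 2) :=
  stmt_15_general lam mu hlamc hmuc hmu y₀ hy₀ Y hY hY0
end

section
/- Fix T > 0, y₀ ∈ [0,1], and continuous nonnegative λ, μ : [0,T] → ℝ. Let Y : [0,T] → ℝ solve Y'(t) = λ(t)(1 − Y(t))Y(t) − μ(t)Y(t) with Y(0) = y₀. For each n ≥ 1 let w_n : [0,T] → [0, K] be continuous (K a constant independent of n) with sup_{t ∈ [0,T]} |w_n(t) − Y(t)²| → 0 as n → ∞, and let z_n : [0,T] → ℝ be differentiable with z_n(0) = y₀ and z_n'(t) = λ(t)(z_n(t) − w_n(t)) − μ(t)z_n(t) for all t ∈ [0,T]. Then sup_{t ∈ [0,T]} |z_n(t) − Y(t)| → 0 as n → ∞. -/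
open Set Filter Real

/-- Final convergence step in the proof of Theorem 2.3: if `wₙ → Y²` uniformly on `[0, T]`
(with `wₙ` uniformly bounded) and `zₙ` solves the linear ODE
`zₙ' = λ(t)(zₙ − wₙ) − μ(t)zₙ` with `zₙ(0) = y₀`, then `zₙ → Y` uniformly on `[0, T]`,
where `Y' = λ(t)(1 − Y)Y − μ(t)Y`, `Y(0) = y₀`. -/
theorem stmt_18 (T : ℝ) (hT : 0 < T) (y₀ : ℝ) (hy₀ : y₀ ∈ Icc (0 : ℝ) 1)
    (lam mu : ℝ → ℝ)
    (hlamc : ContinuousOn lam (Icc 0 T)) (hmuc : ContinuousOn mu (Icc 0 T))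
    (hlam : ∀ t ∈ Icc (0 : ℝ) T, 0 ≤ lam t) (hmu : ∀ t ∈ Icc (0 : ℝ) T, 0 ≤ mu t)
    (Y : ℝ → ℝ) (hY0 : Y 0 = y₀)
    (hY : ∀ t ∈ Icc (0 : ℝ) T,
      HasDerivAt Y (lam t * (1 - Y t) * Y t - mu t * Y t) t)
    (K : ℝ)
    (w : ℕ → ℝ → ℝ)
    (hwc : ∀ n ≥ 1, ContinuousOn (w n) (Icc 0 T))
    (hwK : ∀ n ≥ 1, ∀ t ∈ Icc (0 : ℝ) T, w n t ∈ Icc (0 : ℝ) K)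
    (hwY : Tendsto (fun n => sSup ((fun t => |w n t - Y t ^ 2|) '' Icc (0 : ℝ) T))
      atTop (nhds 0))
    (z : ℕ → ℝ → ℝ)
    (hz0 : ∀ n ≥ 1, z n 0 = y₀)
    (hz : ∀ n ≥ 1, ∀ t ∈ Icc (0 : ℝ) T,
      HasDerivAt (z n) (lam t * (z n t - w n t) - mu t * z n t) t) :
    Tendsto (fun n => sSup ((fun t => |z n t - Y t|) '' Icc (0 : ℝ) T)) atTop (nhds 0) := by
  obtain ⟨Cl, hCl⟩ := isCompact_Icc.exists_bound_of_continuousOn hlamc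
  obtain ⟨Cm, hCm⟩ := isCompact_Icc.exists_bound_of_continuousOn hmuc
  set C : ℝ := max 1 (Cl + Cm) with hCdef
  have hC1 : (1 : ℝ) ≤ C := le_max_left _ _
  have hC0 : (0 : ℝ) < C := lt_of_lt_of_le one_pos hC1
  have hlamC : ∀ t ∈ Icc (0 : ℝ) T, |lam t| ≤ C := by
    intro t ht
    have h1 := hCl t ht
    have h2 := abs_nonneg (mu t)
    have h3 := hCm t ht
    simp only [Real.norm_eq_abs] at h1 h3
    calc |lam t| ≤ Cl + Cm := by linarith
      _ ≤ C := le_max_right _ _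
  have hlmC : ∀ t ∈ Icc (0 : ℝ) T, |lam t - mu t| ≤ C := by
    intro t ht
    have h1 := hCl t ht
    have h3 := hCm t ht
    simp only [Real.norm_eq_abs] at h1 h3
    calc |lam t - mu t| ≤ |lam t| + |mu t| := abs_sub _ _
      _ ≤ Cl + Cm := by linarith
      _ ≤ C := le_max_right _ _
  have hYc : ContinuousOn Y (Icc 0 T) := fun t ht =>
    (hY t ht).continuousAt.continuousWithinAt
  set B : ℝ := Real.exp (C * T) - 1 with hBdef
  have hB0 : 0 ≤ B := by
    have : (1 : ℝ) ≤ Real.exp (C * T) := by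
      rw [← Real.exp_zero]
      exact Real.exp_le_exp.2 (by positivity)
    linarith
  set ε : ℕ → ℝ := fun n => sSup ((fun t => |w n t - Y t ^ 2|) '' Icc (0 : ℝ) T) with hεdef
  have hε0 : ∀ n, 0 ≤ ε n := fun n =>
    Real.sSup_nonneg (by rintro x ⟨t, ht, rfl⟩; exact abs_nonneg _)
  have key : ∀ n ≥ 1, ∀ t ∈ Icc (0 : ℝ) T, |z n t - Y t| ≤ ε n * B := by
    intro n hn
    have hwb : ∀ t ∈ Icc (0 : ℝ) T, |Y t ^ 2 - w n t| ≤ ε n := by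
      intro t ht
      rw [abs_sub_comm]
      exact le_csSup
        (isCompact_Icc.bddAbove_image (((hwc n hn).sub (hYc.pow 2)).abs))
        ⟨t, ht, rfl⟩
    have hznc : ContinuousOn (z n) (Icc 0 T) := fun t ht =>
      (hz n hn t ht).continuousAt.continuousWithinAt
    have hfc : ContinuousOn (fun t => z n t - Y t) (Icc 0 T) := hznc.sub hYc
    have hf' : ∀ t ∈ Ico (0 : ℝ) T,
        HasDerivWithinAt (fun t => z n t - Y t)
          ((lam t * (z n t - w n t) - mu t * z n t)
            - (lam t * (1 - Y t) * Y t - mu t * Y t)) (Ici t) t := by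
      intro t ht
      exact ((hz n hn t (Ico_subset_Icc_self ht)).sub
        (hY t (Ico_subset_Icc_self ht))).hasDerivWithinAt
    have hbound : ∀ t ∈ Ico (0 : ℝ) T,
        ‖(lam t * (z n t - w n t) - mu t * z n t)
          - (lam t * (1 - Y t) * Y t - mu t * Y t)‖
        ≤ C * ‖z n t - Y t‖ + C * ε n := by
      intro t ht
      have ht' : t ∈ Icc (0 : ℝ) T := Ico_subset_Icc_self ht
      have hEq : (lam t * (z n t - w n t) - mu t * z n t)
          - (lam t * (1 - Y t) * Y t - mu t * Y t)
          = (lam t - mu t) * (z n t - Y t) + lam t * (Y t ^ 2 - w n t) := by ring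
      rw [Real.norm_eq_abs, Real.norm_eq_abs, hEq]
      calc |(lam t - mu t) * (z n t - Y t) + lam t * (Y t ^ 2 - w n t)|
          ≤ |(lam t - mu t) * (z n t - Y t)| + |lam t * (Y t ^ 2 - w n t)| :=
            abs_add_le _ _
        _ = |lam t - mu t| * |z n t - Y t| + |lam t| * |Y t ^ 2 - w n t| := by
            rw [abs_mul, abs_mul]
        _ ≤ C * |z n t - Y t| + C * ε n := by
            gcongr
            · exact hlmC t ht'
            · exact hlamC t ht'
            · exact hwb t ht'
    have ha : ‖z n 0 - Y 0‖ ≤ 0 := by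
      simp [hz0 n hn, hY0]
    have hG := norm_le_gronwallBound_of_norm_deriv_right_le hfc hf' ha hbound
    intro t ht
    have h := hG t ht
    rw [Real.norm_eq_abs, sub_zero] at h
    rw [gronwallBound_of_K_ne_0 hC0.ne'] at h
    simp only [zero_mul, zero_add] at h
    have hdiv : C * ε n / C = ε n := by field_simp
    rw [hdiv] at h
    refine h.trans ?_
    have hexp : Real.exp (C * t) - 1 ≤ B := by
      have : Real.exp (C * t) ≤ Real.exp (C * T) :=
        Real.exp_le_exp.2 (by nlinarith [ht.2])
      simp only [hBdef]; linarith
    exact mul_le_mul_of_nonneg_left hexp (hε0 n)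
  have hupper : ∀ᶠ n in atTop,
      sSup ((fun t => |z n t - Y t|) '' Icc (0 : ℝ) T) ≤ ε n * B := by
    filter_upwards [eventually_ge_atTop 1] with n hn
    refine Real.sSup_le ?_ (mul_nonneg (hε0 n) hB0)
    rintro x ⟨t, ht, rfl⟩
    exact key n hn t ht
  have hlower : ∀ᶠ n in atTop,
      (0 : ℝ) ≤ sSup ((fun t => |z n t - Y t|) '' Icc (0 : ℝ) T) := by
    filter_upwards with n
    exact Real.sSup_nonneg (by rintro x ⟨t, ht, rfl⟩; exact abs_nonneg _)
  have hεB : Tendsto (fun n => ε n * B) atTop (nhds 0) := by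
    simpa using hwY.mul_const B
  exact tendsto_of_tendsto_of_tendsto_of_le_of_le' tendsto_const_nhds hεB hlower hupper
end

section
/- Let c > 0, let R, C : [0, c] → ℝ be continuous, let g(x) := R(x) − C(c − x) for x ∈ [0, c], and suppose g attains its maximum over [0, c] at a point x* with x* < c. Fix ε₀ > 0 and x(0) ∈ [0, c − ε₀). Then: (i) for every continuous trajectory x̃ : [0,∞) → [0, c] and every T > 0, ∫₀ᵀ g(x̃(t)) dt ≤ T · g(x*); and (ii) for every ε > 0 there exists δ̂ > 0 such that if λ : [0,∞) → ℝ is continuous with λ(t) > δ̂ for all t and x : [0,∞) → ℝ is differentiable with x'(t) = λ(t)(x(t) − x*)(x(t) − c) and the given initial value x(0), then liminf_{T→∞} (1/T) ∫₀ᵀ g(x(t)) dt ≥ g(x*) − ε. -/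
/-!
Part (i) is monotonicity of the integral, since `g ≤ g x*` on `[0, c]`.

For part (ii), both `x - x*` and `x - c` solve linear equations `z' = G z`, hence
`z t = z 0 * exp (∫₀ᵗ G)`. So `x` never reaches `c`, stays between `x 0` and `x*`, and then
`|x t - x*|` decays at least like `exp (-δ (c - max (x 0) x*) t)` whenever `λ ≥ δ > 0`.
Thus `g ∘ x → g x*`, and the time averages of `g ∘ x` converge to `g x*` as well; any
`δ̂ > 0` works.
-/

open Set Filter Topology MeasureTheory

theorem eq_mul_exp_integral_of_hasDerivAt {z G : ℝ → ℝ} (hG : ContinuousOn G (Ici 0))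
    (hz : ∀ t ≥ (0 : ℝ), HasDerivAt z (G t * z t) t) (t : ℝ) (ht : 0 ≤ t) :
    z t = z 0 * Real.exp (∫ s in (0 : ℝ)..t, G s) := by
  set I : ℝ → ℝ := fun t => ∫ s in (0 : ℝ)..t, G s
  have hGi : ∀ u ≥ (0 : ℝ), IntervalIntegrable G volume 0 u := fun u hu =>
    (hG.mono (uIcc_of_le hu ▸ Icc_subset_Ici_self)).intervalIntegrable
  have hI : ∀ u ≥ (0 : ℝ), HasDerivWithinAt I (G u) (Ici u) u := fun u hu =>
    intervalIntegral.integral_hasDerivWithinAt_right (hGi u hu)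
      (hG.stronglyMeasurableAtFilter_nhdsWithin measurableSet_Ici u |>.filter_mono
        (nhdsWithin_mono _ (Ioi_subset_Ici_self.trans (Ici_subset_Ici.2 hu))))
      ((hG u hu).mono (Ioi_subset_Ici_self.trans (Ici_subset_Ici.2 hu)))
  have hIc : ContinuousOn I (Icc 0 t) := by
    simpa only [uIcc_of_le ht] using
      intervalIntegral.continuousOn_primitive_interval' (hGi t ht) left_mem_uIcc
  have hψ : ∀ u ∈ Ico 0 t, HasDerivWithinAt (fun u => z u * Real.exp (-I u)) 0 (Ici u) u := by
    intro u hu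
    have h : HasDerivWithinAt (fun u => z u * Real.exp (-I u))
        (G u * z u * Real.exp (-I u) + z u * (Real.exp (-I u) * -G u)) (Ici u) u :=
      (hz u hu.1).hasDerivWithinAt.mul (hI u hu.1).neg.exp
    rwa [show G u * z u * Real.exp (-I u) + z u * (Real.exp (-I u) * -G u) = 0 by ring] at h
  have hzc : ContinuousOn z (Icc 0 t) := fun u hu => (hz u hu.1).continuousAt.continuousWithinAt
  have hconst : z t * Real.exp (-I t) = z 0 * Real.exp (-I 0) :=
    constant_of_has_deriv_right_zero (f := fun u => z u * Real.exp (-I u))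
      (hzc.mul hIc.neg.rexp) hψ t ⟨ht, le_rfl⟩
  rw [show I 0 = 0 from intervalIntegral.integral_same, neg_zero, Real.exp_zero, mul_one] at hconst
  rw [← hconst, mul_assoc, ← Real.exp_add, neg_add_cancel, Real.exp_zero, mul_one]

section Logistic

variable {a c : ℝ} {lam x : ℝ → ℝ}

theorem sub_eq_mul_exp_integral_of_logistic (hlam : ContinuousOn lam (Ici 0))
    (hx : ∀ t ≥ (0 : ℝ), HasDerivAt x (lam t * (x t - a) * (x t - c)) t)
    (t : ℝ) (ht : 0 ≤ t) :
    x t - a = (x 0 - a) * Real.exp (-∫ s in (0 : ℝ)..t, lam s * (c - x s)) := by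
  have hxc : ContinuousOn x (Ici 0) := fun s hs => (hx s hs).continuousAt.continuousWithinAt
  rw [← intervalIntegral.integral_neg]
  exact eq_mul_exp_integral_of_hasDerivAt (z := fun s => x s - a)
    (G := fun s => -(lam s * (c - x s))) (hlam.mul (continuousOn_const.sub hxc)).neg
    (fun s hs => ((hx s hs).sub_const a).congr_deriv (by ring)) t ht

theorem lt_of_logistic (hlam : ContinuousOn lam (Ici 0))
    (hx : ∀ t ≥ (0 : ℝ), HasDerivAt x (lam t * (x t - a) * (x t - c)) t) (hx₀ : x 0 < c)
    (t : ℝ) (ht : 0 ≤ t) : x t < c := by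
  -- the equation is symmetric in `a` and `c`
  have h := sub_eq_mul_exp_integral_of_logistic (a := c) (c := a) hlam
    (fun s hs => by simpa only [mul_right_comm] using hx s hs) t ht
  nlinarith [Real.exp_pos (-∫ s in (0 : ℝ)..t, lam s * (a - x s))]

theorem mem_uIcc_of_logistic (hlam : ContinuousOn lam (Ici 0))
    (hlam₀ : ∀ t ≥ (0 : ℝ), 0 ≤ lam t)
    (hx : ∀ t ≥ (0 : ℝ), HasDerivAt x (lam t * (x t - a) * (x t - c)) t) (hx₀ : x 0 < c)
    (t : ℝ) (ht : 0 ≤ t) : x t ∈ uIcc (x 0) a := by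
  have hI : 0 ≤ ∫ s in (0 : ℝ)..t, lam s * (c - x s) :=
    intervalIntegral.integral_nonneg ht fun s hs =>
      mul_nonneg (hlam₀ s hs.1) (sub_nonneg.2 (lt_of_logistic hlam hx hx₀ s hs.1).le)
  have hθ := Real.exp_le_one_iff.2 (neg_nonpos.2 hI)
  have hθ₀ := Real.exp_pos (-∫ s in (0 : ℝ)..t, lam s * (c - x s))
  have h := sub_eq_mul_exp_integral_of_logistic hlam hx t ht
  rw [mem_uIcc]
  rcases le_total (x 0) a with h₀ | h₀
  · left; constructor <;> nlinarith
  · right; constructor <;> nlinarith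

theorem abs_sub_le_of_logistic {δ : ℝ} (hδ : 0 ≤ δ) (hlam : ContinuousOn lam (Ici 0))
    (hlamδ : ∀ t ≥ (0 : ℝ), δ ≤ lam t)
    (hx : ∀ t ≥ (0 : ℝ), HasDerivAt x (lam t * (x t - a) * (x t - c)) t) (hx₀ : x 0 < c)
    (t : ℝ) (ht : 0 ≤ t) :
    |x t - a| ≤ |x 0 - a| * Real.exp (-(δ * (c - max (x 0) a) * t)) := by
  have hlam₀ : ∀ t ≥ (0 : ℝ), 0 ≤ lam t := fun t ht => hδ.trans (hlamδ t ht)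
  have hxc : ContinuousOn x (Ici 0) := fun s hs => (hx s hs).continuousAt.continuousWithinAt
  have hmono : ∀ s ∈ Icc 0 t, δ * (c - max (x 0) a) ≤ lam s * (c - x s) := fun s hs => by
    have hs' := (mem_uIcc_of_logistic hlam hlam₀ hx hx₀ s hs.1).2
    have hxs := lt_of_logistic hlam hx hx₀ s hs.1
    nlinarith [mul_nonneg (sub_nonneg.2 (hlamδ s hs.1)) (sub_nonneg.2 hxs.le),
      mul_nonneg hδ (sub_nonneg.2 hs')]
  have hI : δ * (c - max (x 0) a) * t ≤ ∫ s in (0 : ℝ)..t, lam s * (c - x s) := by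
    have h := intervalIntegral.integral_mono_on (μ := volume) ht intervalIntegrable_const
      ((hlam.mul (continuousOn_const.sub hxc)).mono (uIcc_of_le ht ▸ Icc_subset_Ici_self)
        |>.intervalIntegrable) hmono
    rwa [intervalIntegral.integral_const, smul_eq_mul, sub_zero, mul_comm t] at h
  rw [sub_eq_mul_exp_integral_of_logistic hlam hx t ht, abs_mul, Real.abs_exp]
  gcongr

theorem tendsto_of_logistic {δ : ℝ} (hδ : 0 < δ) (hlam : ContinuousOn lam (Ici 0))
    (hlamδ : ∀ t ≥ (0 : ℝ), δ ≤ lam t)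
    (hx : ∀ t ≥ (0 : ℝ), HasDerivAt x (lam t * (x t - a) * (x t - c)) t) (hx₀ : x 0 < c)
    (ha : a < c) : Tendsto x atTop (𝓝 a) := by
  have hk : 0 < δ * (c - max (x 0) a) := mul_pos hδ (sub_pos.2 (max_lt hx₀ ha))
  have hbound : Tendsto (fun t => |x 0 - a| * Real.exp (-(δ * (c - max (x 0) a) * t)))
      atTop (𝓝 0) := by
    simpa using (Real.tendsto_exp_neg_atTop_nhds_zero.comp
      (tendsto_id.const_mul_atTop hk)).const_mul |x 0 - a|
  refine tendsto_iff_norm_sub_tendsto_zero.2 (squeeze_zero' (.of_forall fun _ => norm_nonneg _)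
    ?_ hbound)
  filter_upwards [eventually_ge_atTop 0] with t ht
  exact abs_sub_le_of_logistic hδ.le hlam hlamδ hx hx₀ t ht

end Logistic

theorem tendsto_integral_div_of_tendsto {f : ℝ → ℝ} {L : ℝ}
    (hf : ∀ T ≥ (0 : ℝ), IntervalIntegrable f volume 0 T) (h : Tendsto f atTop (𝓝 L)) :
    Tendsto (fun T => (∫ t in (0 : ℝ)..T, f t) / T) atTop (𝓝 L) := by
  rw [Metric.tendsto_atTop]
  intro ε hε
  obtain ⟨t₀, ht₀⟩ := eventually_atTop.1
    (h.eventually (Metric.closedBall_mem_nhds L (half_pos hε)))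
  set t₁ := max t₀ 0
  set A := |∫ t in (0 : ℝ)..t₁, (f t - L)|
  refine ⟨max (t₁ + 1) (2 * A / ε + 1), fun T hT => ?_⟩
  have hT₁ : t₁ < T := by linarith [le_max_left (t₁ + 1) (2 * A / ε + 1)]
  have hT₀ : 0 < T := by linarith [le_max_right t₀ 0]
  have hTA : 2 * A < T * ε := by
    rw [← div_lt_iff₀ hε]
    linarith [le_max_right (t₁ + 1) (2 * A / ε + 1)]
  have hfL : ∀ a b, 0 ≤ a → a ≤ b → IntervalIntegrable (fun t => f t - L) volume a b :=
    fun a b ha hab => ((hf b (ha.trans hab)).mono_set (by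
      rw [uIcc_of_le hab, uIcc_of_le (ha.trans hab)]; exact Icc_subset_Icc_left ha)).sub
      intervalIntegrable_const
  have htail : ‖∫ t in t₁..T, (f t - L)‖ ≤ ε / 2 * |T - t₁| :=
    intervalIntegral.norm_integral_le_of_norm_le_const fun t ht =>
      ht₀ t (le_of_max_le_left (uIoc_of_le hT₁.le ▸ ht).1.le)
  have hsplit : (∫ t in (0 : ℝ)..T, f t) / T - L = (∫ t in (0 : ℝ)..T, (f t - L)) / T := by
    rw [intervalIntegral.integral_sub (hf T hT₀.le) intervalIntegrable_const,
      intervalIntegral.integral_const, smul_eq_mul, sub_zero, sub_div,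
      mul_div_cancel_left₀ L hT₀.ne']
  rw [Real.dist_eq, hsplit, abs_div, abs_of_pos hT₀, div_lt_iff₀ hT₀,
    ← intervalIntegral.integral_add_adjacent_intervals (hfL 0 t₁ le_rfl (le_max_right _ _))
      (hfL t₁ T (le_max_right _ _) hT₁.le)]
  rw [Real.norm_eq_abs, abs_of_pos (sub_pos.2 hT₁)] at htail
  calc _ ≤ A + |∫ t in t₁..T, (f t - L)| := abs_add_le _ _
    _ < ε * T := by nlinarith [le_max_right t₀ 0]

theorem stmt_19_general (c : ℝ) (R C : ℝ → ℝ)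
    (hR : ContinuousOn R (Icc 0 c)) (hC : ContinuousOn C (Icc 0 c))
    (g : ℝ → ℝ) (hg : ∀ x : ℝ, g x = R x - C (c - x))
    (xstar : ℝ) (hxstar_mem : xstar ∈ Icc (0 : ℝ) c) (hxstar_lt : xstar < c)
    (hmax : ∀ x ∈ Icc (0 : ℝ) c, g x ≤ g xstar)
    (ε₀ : ℝ) (hε₀ : 0 < ε₀)
    (x0 : ℝ) (hx0 : x0 ∈ Ico (0 : ℝ) (c - ε₀)) :
    (∀ xt : ℝ → ℝ, Continuous xt → (∀ t ≥ (0 : ℝ), xt t ∈ Icc (0 : ℝ) c) →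
      ∀ T > (0 : ℝ), (∫ t in (0 : ℝ)..T, g (xt t)) ≤ T * g xstar) ∧
    (∀ ε > (0 : ℝ), ∃ δhat > (0 : ℝ),
      ∀ (lam : ℝ → ℝ) (x : ℝ → ℝ),
        Continuous lam → (∀ t : ℝ, δhat < lam t) →
        (∀ t ≥ (0 : ℝ), HasDerivAt x (lam t * (x t - xstar) * (x t - c)) t) →
        x 0 = x0 →
        g xstar - ε ≤ Filter.liminf (fun T => (∫ t in (0 : ℝ)..T, g (x t)) / T) atTop) := by
  have hgc : ContinuousOn g (Icc 0 c) :=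
    (hR.sub (hC.comp (continuousOn_const.sub continuousOn_id) fun y hy =>
      ⟨sub_nonneg.2 hy.2, sub_le_self c hy.1⟩)).congr fun y _ => hg y
  refine ⟨fun xt hxt hmem T hT => ?_,
    fun ε hε => ⟨1, one_pos, fun lam x hlam hlam₁ hx hx₀ => ?_⟩⟩
  · calc (∫ t in (0 : ℝ)..T, g (xt t)) ≤ ∫ _ in (0 : ℝ)..T, g xstar :=
          intervalIntegral.integral_mono_on hT.le
            ((hgc.comp hxt.continuousOn fun t ht => hmem t ht.1).intervalIntegrable_of_Icc hT.le)
            intervalIntegrable_const fun t ht => hmax _ (hmem t ht.1)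
      _ = T * g xstar := by simp
  · subst hx₀
    have hx0c : x 0 < c := by linarith [hx0.2]
    have hmem : ∀ t ≥ (0 : ℝ), x t ∈ Icc 0 c := fun t ht =>
      uIcc_subset_Icc ⟨hx0.1, hx0c.le⟩ hxstar_mem <| mem_uIcc_of_logistic hlam.continuousOn
        (fun t _ => (one_pos.trans (hlam₁ t)).le) hx hx0c t ht
    have hxc : ContinuousOn x (Ici 0) := fun t ht => (hx t ht).continuousAt.continuousWithinAt
    have hxlim : Tendsto x atTop (𝓝[Icc 0 c] xstar) :=
      tendsto_nhdsWithin_iff.2 ⟨tendsto_of_logistic one_pos hlam.continuousOn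
        (fun t _ => (hlam₁ t).le) hx hx0c hxstar_lt, eventually_atTop.2 ⟨0, hmem⟩⟩
    have hlim := tendsto_integral_div_of_tendsto (f := fun t => g (x t)) (fun T hT =>
      ((hgc.comp hxc hmem).mono Icc_subset_Ici_self).intervalIntegrable_of_Icc hT)
      ((hgc xstar hxstar_mem).tendsto.comp hxlim)
    rw [hlim.liminf_eq]
    linarith

/-- Precise form of Theorem 3.5 (optimal control with no adjustment costs): with
`g x = R x − C (c − x)` maximized over `[0, c]` at `x* < c`,
(i) the ideal trajectory dominates any admissible trajectory:
`∫₀ᵀ g(x̃(t)) dt ≤ T g(x*)`, and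
(ii) for every `ε > 0` there is `δ̂ > 0` such that under the policy `μ(t)/λ(t) = x*` with
`λ(t) > δ̂`, the time-averaged reward satisfies
`liminf_{T→∞} (1/T) ∫₀ᵀ g(x(t)) dt ≥ g(x*) − ε`. -/
theorem stmt_19 (c : ℝ) (hc : 0 < c) (R C : ℝ → ℝ)
    (hR : ContinuousOn R (Icc 0 c)) (hC : ContinuousOn C (Icc 0 c))
    (g : ℝ → ℝ) (hg : ∀ x : ℝ, g x = R x - C (c - x))
    (xstar : ℝ) (hxstar_mem : xstar ∈ Icc (0 : ℝ) c) (hxstar_lt : xstar < c)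
    (hmax : ∀ x ∈ Icc (0 : ℝ) c, g x ≤ g xstar)
    (ε₀ : ℝ) (hε₀ : 0 < ε₀)
    (x0 : ℝ) (hx0 : x0 ∈ Ico (0 : ℝ) (c - ε₀)) :
    (∀ xt : ℝ → ℝ, Continuous xt → (∀ t ≥ (0 : ℝ), xt t ∈ Icc (0 : ℝ) c) →
      ∀ T > (0 : ℝ), (∫ t in (0 : ℝ)..T, g (xt t)) ≤ T * g xstar) ∧
    (∀ ε > (0 : ℝ), ∃ δhat > (0 : ℝ),
      ∀ (lam : ℝ → ℝ) (x : ℝ → ℝ),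
        Continuous lam → (∀ t : ℝ, δhat < lam t) →
        (∀ t ≥ (0 : ℝ), HasDerivAt x (lam t * (x t - xstar) * (x t - c)) t) →
        x 0 = x0 →
        g xstar - ε ≤ Filter.liminf (fun T => (∫ t in (0 : ℝ)..T, g (x t)) / T) atTop) :=
  stmt_19_general c R C hR hC g hg xstar hxstar_mem hxstar_lt hmax ε₀ hε₀ x0 hx0
end
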